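/- arXiv:2509.01857 — 6 statements merged into one kernel-verified Lean document; each statement's English description precedes it below -/
import Mathlib

section
/- Let 1 ≤ m ≤ n and π ∈ S_{m,n}. Then E°_π = {(X,Y) ∈ E : (YX)_{π(i)π(i)} = (XY)_{ii} for all 1 ≤ i ≤ m, and the scalars (XY)_{11},…,(XY)_{mm} are pairwise distinct and nonzero}. -/
open Matrix

/-- The ambient space `Mat(m,n,ℂ) × Mat(n,m,ℂ)`. -/
abbrev LUSpace (m n : ℕ) := Matrix (Fin m) (Fin n) ℂ × Matrix (Fin n) (Fin m) ℂ

/-- Lower triangular square matrix. -/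
def LowerTri {k : ℕ} (M : Matrix (Fin k) (Fin k) ℂ) : Prop := ∀ i j : Fin k, i < j → M i j = 0

/-- Upper triangular square matrix. -/
def UpperTri {k : ℕ} (M : Matrix (Fin k) (Fin k) ℂ) : Prop := ∀ i j : Fin k, j < i → M i j = 0

/-- The lower-upper scheme `E`. -/
def LU (m n : ℕ) : Set (LUSpace m n) :=
  { p | LowerTri (p.1 * p.2) ∧ UpperTri (p.2 * p.1) }

/-- The partial permutation matrix associated to `π ∈ S_{m,n}`. -/
def permMat {m n : ℕ} (π : Fin m ↪ Fin n) : Matrix (Fin m) (Fin n) ℂ :=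
  fun i j => if π i = j then 1 else 0

/-- Invertible lower triangular m×m matrices. -/
def Bminus (m : ℕ) : Set (Matrix (Fin m) (Fin m) ℂ) := { b | IsUnit b ∧ LowerTri b }

/-- Invertible upper triangular n×n matrices. -/
def Bplus (n : ℕ) : Set (Matrix (Fin n) (Fin n) ℂ) := { c | IsUnit c ∧ UpperTri c }

/-- Lower unitriangular m×m matrices. -/
def Nminus (m : ℕ) : Set (Matrix (Fin m) (Fin m) ℂ) := { b | LowerTri b ∧ ∀ i, b i i = 1 }

/-- Upper unitriangular n×n matrices. -/
def Nplus (n : ℕ) : Set (Matrix (Fin n) (Fin n) ℂ) := { c | UpperTri c ∧ ∀ j, c j j = 1 }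

/-- `E°_π`. -/
def Eopen {m n : ℕ} (π : Fin m ↪ Fin n) : Set (LUSpace m n) :=
  { p | ∃ b ∈ Nminus m, ∃ c ∈ Nplus n, ∃ s t : Fin m → ℂ,
      (∀ i, s i * t i ≠ 0) ∧ (∀ i i' : Fin m, i ≠ i' → s i * t i ≠ s i' * t i') ∧
      p.1 = b * (Matrix.diagonal s * permMat π) * c⁻¹ ∧
      p.2 = c * ((permMat π)ᵀ * Matrix.diagonal t) * b⁻¹ }

/-- Coordinates of a point of `LUSpace` as a function on the variable-index type. -/
def coordsOf {m n : ℕ} (p : LUSpace m n) : (Fin m × Fin n) ⊕ (Fin n × Fin m) → ℂ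
  | .inl ij => p.1 ij.1 ij.2
  | .inr ji => p.2 ji.1 ji.2

/-- Zariski closure of a subset of `LUSpace m n`: the common zero set of all polynomials
vanishing identically on the subset. -/
def zclosure {m n : ℕ} (S : Set (LUSpace m n)) : Set (LUSpace m n) :=
  { p | ∀ f : MvPolynomial ((Fin m × Fin n) ⊕ (Fin n × Fin m)) ℂ,
      (∀ q ∈ S, MvPolynomial.eval (coordsOf q) f = 0) → MvPolynomial.eval (coordsOf p) f = 0 }

/-- `E_π`, the Zariski closure of `E°_π`. -/
def Ecomp {m n : ℕ} (π : Fin m ↪ Fin n) : Set (LUSpace m n) := zclosure (Eopen π)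

/-- Zariski closure in the matrix space `Mat(m,n,ℂ)`. -/
def mzclosure {m n : ℕ} (S : Set (Matrix (Fin m) (Fin n) ℂ)) : Set (Matrix (Fin m) (Fin n) ℂ) :=
  { X | ∀ f : MvPolynomial (Fin m × Fin n) ℂ,
      (∀ Y ∈ S, MvPolynomial.eval (fun ij => Y ij.1 ij.2) f = 0) →
        MvPolynomial.eval (fun ij => X ij.1 ij.2) f = 0 }

/-!
If `XY` is lower triangular with distinct nonzero diagonal `d`, evaluating Lagrange basis
polynomials at `XY` (Cayley–Hamilton) gives a lower unitriangular `b` with `XY b = b diag(d)`;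
replacing `(X, Y)` by `(b⁻¹X, Yb)` we may assume `XY = diag(d)`.
As `λⁿ χ_{XY}(λ) = λᵐ χ_{YX}(λ)`, each `d_j` occurs exactly once on the diagonal of the upper
triangular `YX`, namely at `π(j)`.
The `j`-th column of `Y` and the `j`-th row of `X` are eigenvectors of `YX` for `d_j`, hence
supported on indices `≤ π(j)` resp. `≥ π(j)`; these columns, completed by the projection onto
`ker X` along `im Y`, form an upper unitriangular `c` with `Xc = sπ` and `cπᵀt = Y`.
Conversely the diagonals of `XY = b diag(st) b⁻¹` and `YX = c (πᵀ diag(ts) π) c⁻¹` are read off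
directly.
-/

open Polynomial Finset

theorem Polynomial.rootMultiplicity_prod_X_sub_C {ι K : Type*} [Field K] [DecidableEq K]
    (s : Finset ι) (f : ι → K) (a : K) :
    (∏ i ∈ s, (X - C (f i))).rootMultiplicity a = #{i ∈ s | f i = a} := by
  have h : (s.val.map fun i => X - C (f i)) = (s.val.map f).map (X - C ·) := by
    rw [Multiset.map_map]; rfl
  rw [← count_roots, prod_eq_multiset_prod, h, roots_multiset_prod_X_sub_C, Multiset.count_map,
    card_def, filter_val]
  exact congrArg _ (Multiset.filter_congr fun _ _ => eq_comm)

namespace Matrix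

variable {ι κ α K : Type*} [Fintype ι] [Fintype κ] [Field K]

section BlockTriangular
variable [LinearOrder α] {b : ι → α} {M N : Matrix ι ι K}

theorem BlockTriangular.mul_apply_self (hb : Function.Injective b) (hM : M.BlockTriangular b)
    (hN : N.BlockTriangular b) (i : ι) : (M * N) i i = M i i * N i i := by
  rw [mul_apply, sum_eq_single i (fun k _ hk => ?_) (by simp)]
  rcases lt_or_gt_of_ne (hb.ne hk) with h | h
  · rw [hM h, zero_mul]
  · rw [hN h, mul_zero]

theorem BlockTriangular.eq_zero_of_mulVec_eq_smul (hb : Function.Injective b)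
    (hM : M.BlockTriangular b) {v : ι → K} {a : K} (hv : M *ᵥ v = a • v) {p : ι}
    (hp : ∀ k, M k k = a → k = p) {k : ι} (hk : b p < b k) : v k = 0 := by
  classical
  by_contra hvk
  obtain ⟨k₀, hk₀, hmax⟩ := exists_max_image {l | b p < b l ∧ v l ≠ 0} b ⟨k, by simp [hk, hvk]⟩
  simp only [mem_filter, mem_univ, true_and] at hk₀ hmax
  have hrow : (M *ᵥ v) k₀ = M k₀ k₀ * v k₀ := by
    rw [mulVec, dotProduct]
    refine sum_eq_single k₀ (fun l _ hl => ?_) (by simp)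
    rcases lt_or_gt_of_ne (hb.ne hl) with h | h
    · rw [hM h, zero_mul]
    · by_contra hne
      exact (hmax l ⟨hk₀.1.trans h, right_ne_zero_of_mul hne⟩).not_gt h
  rw [hv, Pi.smul_apply, smul_eq_mul] at hrow
  have hk₀p := hp k₀ (mul_right_cancel₀ hk₀.2 hrow.symm)
  exact (hk₀p ▸ hk₀.1).false

theorem BlockTriangular.eq_zero_of_vecMul_eq_smul (hb : Function.Injective b)
    (hM : M.BlockTriangular b) {v : ι → K} {a : K} (hv : v ᵥ* M = a • v) {p : ι}
    (hp : ∀ k, M k k = a → k = p) {k : ι} (hk : b k < b p) : v k = 0 :=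
  hM.transpose.eq_zero_of_mulVec_eq_smul (OrderDual.toDual.injective.comp hb)
    (by rwa [mulVec_transpose]) hp hk

variable [DecidableEq ι]

theorem BlockTriangular.inv (hM : M.BlockTriangular b) : M⁻¹.BlockTriangular b := by
  by_cases h : IsUnit M.det
  · let _ := M.invertibleOfIsUnitDet h
    exact blockTriangular_inv_of_blockTriangular hM
  · rw [nonsing_inv_apply_not_isUnit M h]
    exact blockTriangular_zero

theorem BlockTriangular.conj_apply_self (hb : Function.Injective b) (hM : M.BlockTriangular b)
    (hN : N.BlockTriangular b) (hdet : IsUnit M.det) (i : ι) :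
    (M * N * M⁻¹) i i = N i i := by
  have h := hM.mul_apply_self hb hM.inv i
  rw [mul_nonsing_inv M hdet, one_apply_eq] at h
  rw [(hM.mul hN).mul_apply_self hb hM.inv, hM.mul_apply_self hb hN]
  linear_combination N i i * h.symm

theorem BlockTriangular.pow_apply_self (hb : Function.Injective b) (hM : M.BlockTriangular b)
    (k : ℕ) (i : ι) : (M ^ k) i i = M i i ^ k := by
  induction k with
  | zero => simp
  | succ k ih => rw [pow_succ, (hM.pow k).mul_apply_self hb hM, ih, pow_succ]

theorem BlockTriangular.aeval (hM : M.BlockTriangular b) (p : K[X]) :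
    (aeval M p).BlockTriangular b := by
  have h := aeval_subalgebra_coe p (blockTriangularSubalgebra K K b) ⟨M, hM⟩
  exact h ▸ (Polynomial.aeval (⟨M, hM⟩ : blockTriangularSubalgebra K K b) p).2

theorem BlockTriangular.aeval_apply_self (hb : Function.Injective b) (hM : M.BlockTriangular b)
    (p : K[X]) (i : ι) : Polynomial.aeval M p i i = p.eval (M i i) := by
  induction p using Polynomial.induction_on' with
  | add p q hp hq => simp [hp, hq]
  | monomial k a => simp [aeval_monomial, Algebra.algebraMap_eq_smul_one, hM.pow_apply_self hb]

end BlockTriangular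

variable [DecidableEq ι]

theorem IsLowerTriangular.charpoly_eq_nodal [LinearOrder ι] {A : Matrix ι ι K}
    (hA : A.IsLowerTriangular) : A.charpoly = Lagrange.nodal univ A.diag := by
  rw [← A.charpoly_transpose, charpoly_of_isUpperTriangular Aᵀ fun _ _ h => hA h, Lagrange.nodal]
  rfl

theorem IsLowerTriangular.exists_unitriangular_mul_eq_mul_diagonal [LinearOrder ι]
    {A : Matrix ι ι K} (hA : A.IsLowerTriangular) (hd : Function.Injective A.diag) :
    ∃ P : Matrix ι ι K, P.IsLowerTriangular ∧ (∀ i, P i i = 1) ∧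
      A * P = P * diagonal A.diag := by
  have heigen (j : ι) :
      (A - algebraMap K _ (A j j)) * aeval A (Lagrange.basis univ A.diag j) = 0 := by
    have hdvd : A.charpoly ∣ (X - C (A j j)) * Lagrange.basis univ A.diag j := by
      rw [hA.charpoly_eq_nodal, Lagrange.basis_eq_prod_sub_inv_mul_nodal_div (mem_univ j),
        ← Lagrange.nodal_erase_eq_nodal_div (mem_univ j),
        Lagrange.nodal_eq_mul_nodal_erase (mem_univ j)]
      exact mul_dvd_mul_left _ (dvd_mul_left _ _)
    have h := aeval_eq_zero_of_dvd_aeval_eq_zero hdvd (aeval_self_charpoly A)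
    rwa [map_mul, map_sub, aeval_X, aeval_C] at h
  refine ⟨of fun i j => aeval A (Lagrange.basis univ A.diag j) i j,
    fun i j h => BlockTriangular.aeval hA _ h, fun i => ?_, ?_⟩
  · simpa [BlockTriangular.aeval_apply_self OrderDual.toDual.injective hA] using
      Lagrange.eval_basis_self (hd.injOn (s := ((univ : Finset ι) : Set ι))) (mem_univ i)
  · ext i j
    have h := congrFun (congrFun (heigen j) i) j
    simp only [Algebra.algebraMap_eq_smul_one, sub_mul, smul_mul, one_mul, sub_apply, smul_apply,
      smul_eq_mul, zero_apply, sub_eq_zero] at h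
    rw [mul_diagonal, of_apply, diag_apply, mul_comm, ← h]
    simp only [mul_apply, of_apply]

variable [DecidableEq κ]

theorem rootMultiplicity_charpoly_mul_comm (A : Matrix ι κ K) (B : Matrix κ ι K) {a : K}
    (ha : a ≠ 0) : (A * B).charpoly.rootMultiplicity a = (B * A).charpoly.rootMultiplicity a := by
  have hX (k : ℕ) : rootMultiplicity a (X ^ k : K[X]) = 0 := rootMultiplicity_eq_zero (by simp [ha])
  have h := congrArg (rootMultiplicity a) (charpoly_mul_comm' A B)
  rwa [rootMultiplicity_mul (mul_ne_zero (pow_ne_zero _ X_ne_zero) (charpoly_monic _).ne_zero),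
    rootMultiplicity_mul (mul_ne_zero (pow_ne_zero _ X_ne_zero) (charpoly_monic _).ne_zero),
    hX, hX, zero_add, zero_add] at h

variable [LinearOrder κ] {X : Matrix ι κ K} {Y : Matrix κ ι K} {d : ι → K}

theorem IsUpperTriangular.card_diag_eq_of_mul_eq_diagonal [DecidableEq K]
    (hYX : (Y * X).IsUpperTriangular) (hXY : X * Y = diagonal d) (hd : Function.Injective d)
    {j : ι} (hj : d j ≠ 0) : #{k | (Y * X) k k = d j} = 1 := by
  rw [← rootMultiplicity_prod_X_sub_C, ← charpoly_of_isUpperTriangular _ hYX,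
    ← rootMultiplicity_charpoly_mul_comm X Y hj, hXY, charpoly_diagonal,
    rootMultiplicity_prod_X_sub_C]
  exact card_eq_one.2 ⟨j, by ext; simp [hd.eq_iff]⟩

theorem support_of_mul_eq_diagonal {π : ι → κ} (hXY : X * Y = diagonal d)
    (hYX : (Y * X).IsUpperTriangular) (hd0 : ∀ i, d i ≠ 0) (hd : Function.Injective d)
    (hπ : ∀ j, (Y * X) (π j) (π j) = d j) :
    (∀ j k, k < π j → X j k = 0) ∧ (∀ j k, π j < k → Y k j = 0) := by
  classical
  have huniq (j : ι) (k : κ) (hk : (Y * X) k k = d j) : k = π j :=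
    card_le_one.1 (hYX.card_diag_eq_of_mul_eq_diagonal hXY hd (hd0 j)).le k (by simpa using hk)
      (π j) (by simpa using hπ j)
  refine ⟨fun j k hk => hYX.eq_zero_of_vecMul_eq_smul Function.injective_id ?_ (huniq j) hk,
    fun j k hk => hYX.eq_zero_of_mulVec_eq_smul Function.injective_id (v := fun k => Y k j) ?_
      (huniq j) hk⟩
  · rw [← mul_apply_eq_vecMul, ← Matrix.mul_assoc, hXY]
    ext l
    simp
  · ext k
    have h : (Y * (X * Y)) k j = (Y * diagonal d) k j := by rw [hXY]
    rw [← Matrix.mul_assoc, mul_diagonal] at h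
    rw [Pi.smul_apply, smul_eq_mul, mul_comm, ← h]
    rfl

end Matrix

section PermMat
variable {m n : ℕ} (π : Fin m ↪ Fin n)

theorem permMat_mul_transpose : permMat π * (permMat π)ᵀ = 1 := by
  ext i i'
  simp [permMat, mul_apply, one_apply]

theorem transpose_permMat_mul_diagonal_mul_permMat (w : Fin m → ℂ) :
    (permMat π)ᵀ * diagonal w * permMat π = diagonal (Function.extend π w 0) := by
  ext k l
  by_cases hk : ∃ j, π j = k
  · obtain ⟨j, rfl⟩ := hk
    rw [mul_apply, sum_eq_single j (fun i _ hi => ?_) (by simp)]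
    · simp [permMat, diagonal_apply, π.injective.extend_apply, eq_comm]
    · simp [permMat, π.injective.ne_iff.2 hi]
  · simp [permMat, mul_apply, diagonal_apply, fun j => (not_exists.1 hk j)]

theorem mul_permMat_apply_self {κ : Type*} (M : Matrix κ (Fin m) ℂ) (l : κ) (j : Fin m) :
    (M * permMat π) l (π j) = M l j := by
  simp [permMat, mul_apply]

theorem mul_permMat_apply_of_notMem {κ : Type*} (M : Matrix κ (Fin m) ℂ) (l : κ) {k : Fin n}
    (hk : ∀ j, π j ≠ k) : (M * permMat π) l k = 0 := by
  simp [permMat, mul_apply, hk]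

theorem diagonal_indicator_compl_range_mul_transpose_permMat :
    diagonal ((Set.range π)ᶜ.indicator (1 : Fin n → ℂ)) * (permMat π)ᵀ = 0 := by
  ext k j
  by_cases h : π j = k
  · simp [permMat, diagonal_mul, ← h]
  · simp [permMat, diagonal_mul, h]

end PermMat

section NormalForm
variable {m n : ℕ} (π : Fin m ↪ Fin n) (X : Matrix (Fin m) (Fin n) ℂ)
  (Y : Matrix (Fin n) (Fin m) ℂ) (d : Fin m → ℂ)

-- Column `π j` is the `j`-th column of `Y`, rescaled; any other column `k` is `e_k` projected
-- onto `ker X` along `range Y` (a projection when `X * Y = diagonal d`).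
noncomputable def unitriangularCompletion : Matrix (Fin n) (Fin n) ℂ :=
  Y * diagonal (fun j => (Y (π j) j)⁻¹) * permMat π +
    (1 - Y * diagonal d⁻¹ * X) * diagonal ((Set.range π)ᶜ.indicator 1)

theorem unitriangularCompletion_apply_self (l : Fin n) (j : Fin m) :
    unitriangularCompletion π X Y d l (π j) = Y l j * (Y (π j) j)⁻¹ := by
  simp [unitriangularCompletion, mul_permMat_apply_self, mul_diagonal]

theorem unitriangularCompletion_apply_of_notMem (l : Fin n) {k : Fin n} (hk : ∀ j, π j ≠ k) :
    unitriangularCompletion π X Y d l k =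
      (1 - Y * diagonal d⁻¹ * X : Matrix (Fin n) (Fin n) ℂ) l k := by
  simp [unitriangularCompletion, mul_permMat_apply_of_notMem π _ l hk, mul_diagonal,
    Set.indicator_of_mem (show k ∈ (Set.range π)ᶜ from fun ⟨j, hj⟩ => hk j hj)]

variable {π X Y d}

theorem unitriangularCompletion_mem_Nplus (hX : ∀ j k, k < π j → X j k = 0)
    (hY : ∀ j k, π j < k → Y k j = 0) (ht : ∀ j, Y (π j) j ≠ 0) :
    unitriangularCompletion π X Y d ∈ Nplus n := by
  have hvanish (l k : Fin n) (hk : ∀ j, π j ≠ k) (hkl : k ≤ l) :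
      (Y * diagonal d⁻¹ * X) l k = 0 := by
    rw [mul_apply]
    refine sum_eq_zero fun j _ => ?_
    rw [mul_diagonal]
    rcases lt_or_gt_of_ne (hk j) with h | h
    · rw [hY j l (h.trans_le hkl), zero_mul, zero_mul]
    · rw [hX j k h, mul_zero]
  refine ⟨fun l k hkl => ?_, fun k => ?_⟩ <;> by_cases hk : ∃ j, π j = k
  · obtain ⟨j, rfl⟩ := hk
    rw [unitriangularCompletion_apply_self, hY j l hkl, zero_mul]
  · rw [unitriangularCompletion_apply_of_notMem π X Y d l (not_exists.1 hk), Matrix.sub_apply,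
      one_apply_ne hkl.ne', hvanish l k (not_exists.1 hk) hkl.le, sub_zero]
  · obtain ⟨j, rfl⟩ := hk
    rw [unitriangularCompletion_apply_self, mul_inv_cancel₀ (ht j)]
  · rw [unitriangularCompletion_apply_of_notMem π X Y d k (not_exists.1 hk), Matrix.sub_apply,
      one_apply_eq, hvanish k k (not_exists.1 hk) le_rfl, sub_zero]

theorem mul_apply_self_of_support (hX : ∀ j k, k < π j → X j k = 0)
    (hY : ∀ j k, π j < k → Y k j = 0) (j : Fin m) : (X * Y) j j = X j (π j) * Y (π j) j := by
  rw [mul_apply, sum_eq_single (π j) (fun k _ hk => ?_) (by simp)]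
  rcases lt_or_gt_of_ne hk with h | h
  · rw [hX j k h, zero_mul]
  · rw [hY j k h, mul_zero]

theorem exists_mem_Nplus_of_mul_eq_diagonal (hd : ∀ i, d i ≠ 0) (hXY : X * Y = diagonal d)
    (hX : ∀ j k, k < π j → X j k = 0) (hY : ∀ j k, π j < k → Y k j = 0) :
    ∃ c ∈ Nplus n, ∃ s t : Fin m → ℂ, s * t = d ∧ X * c = diagonal s * permMat π ∧
      c * ((permMat π)ᵀ * diagonal t) = Y := by
  set s : Fin m → ℂ := fun j => X j (π j)
  set t : Fin m → ℂ := fun j => Y (π j) j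
  have hst : s * t = d := funext fun j => by
    rw [← diagonal_apply_eq d j, ← hXY, mul_apply_self_of_support hX hY]
    rfl
  have ht (j : Fin m) : t j ≠ 0 := right_ne_zero_of_mul (hst ▸ hd j : (s * t) j ≠ 0)
  set q : Fin n → ℂ := (Set.range π)ᶜ.indicator 1
  have hdd : diagonal d * diagonal d⁻¹ = 1 := by
    rw [diagonal_mul_diagonal, ← diagonal_one]
    exact congrArg diagonal (funext fun j => mul_inv_cancel₀ (hd j))
  refine ⟨_, unitriangularCompletion_mem_Nplus (d := d) hX hY ht, s, t, hst, ?_, ?_⟩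
  · calc X * unitriangularCompletion π X Y d
          = X * Y * diagonal t⁻¹ * permMat π + (X - X * Y * diagonal d⁻¹ * X) * diagonal q := by
          simp only [unitriangularCompletion, Matrix.mul_add, ← Matrix.mul_assoc, Matrix.mul_sub,
            Matrix.mul_one]
          rfl
      _ = diagonal s * permMat π := by
          rw [hXY, hdd, Matrix.one_mul, sub_self, Matrix.zero_mul, add_zero, diagonal_mul_diagonal,
            ← hst]
          congr 2
          funext j
          simp [mul_inv_cancel_right₀ (ht j)]
  · calc unitriangularCompletion π X Y d * ((permMat π)ᵀ * diagonal t)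
          = Y * diagonal t⁻¹ * (permMat π * (permMat π)ᵀ) * diagonal t
            + (1 - Y * diagonal d⁻¹ * X) * (diagonal q * (permMat π)ᵀ) * diagonal t := by
          simp only [unitriangularCompletion, Matrix.add_mul, Matrix.mul_assoc]
          rfl
      _ = Y := by
          rw [permMat_mul_transpose, diagonal_indicator_compl_range_mul_transpose_permMat, Matrix.mul_zero, Matrix.zero_mul, add_zero,
            Matrix.mul_one, Matrix.mul_assoc, diagonal_mul_diagonal, show (fun j => t⁻¹ j * t j) = fun _ => 1 from funext fun j => inv_mul_cancel₀ (ht j),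
            diagonal_one, Matrix.mul_one]

end NormalForm

section LowerUpper
variable {m n : ℕ} (π : Fin m ↪ Fin n)

theorem lowerTri_iff {k : ℕ} {M : Matrix (Fin k) (Fin k) ℂ} : LowerTri M ↔ M.IsLowerTriangular :=
  Iff.rfl

theorem upperTri_iff {k : ℕ} {M : Matrix (Fin k) (Fin k) ℂ} : UpperTri M ↔ M.IsUpperTriangular :=
  Iff.rfl

theorem isUnit_det_of_mem_Nminus {b : Matrix (Fin m) (Fin m) ℂ} (hb : b ∈ Nminus m) :
    IsUnit b.det := by
  simp [det_of_isLowerTriangular b hb.1, hb.2]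

theorem isUnit_det_of_mem_Nplus {c : Matrix (Fin n) (Fin n) ℂ} (hc : c ∈ Nplus n) :
    IsUnit c.det := by
  simp [det_of_isUpperTriangular hc.1, hc.2]

theorem mem_LU_and_diag_of_mem_Eopen {p : LUSpace m n} (hp : p ∈ Eopen π) :
    p ∈ LU m n ∧ (∀ i, (p.2 * p.1) (π i) (π i) = (p.1 * p.2) i i) ∧ (∀ i, (p.1 * p.2) i i ≠ 0) ∧
      ∀ i i', i ≠ i' → (p.1 * p.2) i i ≠ (p.1 * p.2) i' i' := by
  obtain ⟨b, hb, c, hc, s, t, hst0, hst, hX, hY⟩ := hp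
  have hbl := lowerTri_iff.1 hb.1
  have hcu := upperTri_iff.1 hc.1
  have hbdet := isUnit_det_of_mem_Nminus hb
  have hcdet := isUnit_det_of_mem_Nplus hc
  have hXY : p.1 * p.2 = b * diagonal (s * t) * b⁻¹ := by
    rw [hX, hY]
    simp only [Matrix.mul_assoc, nonsing_inv_mul_cancel_left _ _ hcdet]
    rw [← Matrix.mul_assoc (permMat π), permMat_mul_transpose, Matrix.one_mul,
      ← Matrix.mul_assoc (diagonal s), diagonal_mul_diagonal]
    rfl
  have hYX : p.2 * p.1 = c * diagonal (Function.extend π (t * s) 0) * c⁻¹ := by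
    rw [hX, hY, ← transpose_permMat_mul_diagonal_mul_permMat]
    simp only [Matrix.mul_assoc, nonsing_inv_mul_cancel_left _ _ hbdet]
    rw [← Matrix.mul_assoc (diagonal t), diagonal_mul_diagonal]
    rfl
  have hdXY (i : Fin m) : (p.1 * p.2) i i = s i * t i := by
    rw [hXY, hbl.conj_apply_self OrderDual.toDual.injective
      (blockTriangular_diagonal _) hbdet, diagonal_apply_eq, Pi.mul_apply]
  have hdYX (i : Fin m) : (p.2 * p.1) (π i) (π i) = s i * t i := by
    rw [hYX, hcu.conj_apply_self Function.injective_id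
      (blockTriangular_diagonal _) hcdet, diagonal_apply_eq, π.injective.extend_apply,
      Pi.mul_apply, mul_comm]
  refine ⟨⟨?_, ?_⟩, fun i => by rw [hdXY, hdYX], fun i => hdXY i ▸ hst0 i,
    fun i i' h => hdXY i ▸ hdXY i' ▸ hst i i' h⟩
  · rw [hXY]
    exact (hbl.mul (blockTriangular_diagonal _)).mul hbl.inv
  · rw [hYX]
    exact (hcu.mul (blockTriangular_diagonal _)).mul hcu.inv

theorem mem_Eopen_of_diag_eq {X : Matrix (Fin m) (Fin n) ℂ} {Y : Matrix (Fin n) (Fin m) ℂ}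
    (hA : LowerTri (X * Y)) (hB : UpperTri (Y * X))
    (hπ : ∀ i, (Y * X) (π i) (π i) = (X * Y) i i) (h0 : ∀ i, (X * Y) i i ≠ 0)
    (hd : ∀ i i', i ≠ i' → (X * Y) i i ≠ (X * Y) i' i') : (X, Y) ∈ Eopen π := by
  have hdinj : Function.Injective (X * Y).diag := fun i i' h => by
    by_contra hne
    exact hd i i' hne h
  obtain ⟨b, hbl, hb1, hAb⟩ :=
    IsLowerTriangular.exists_unitriangular_mul_eq_mul_diagonal (lowerTri_iff.1 hA) hdinj
  have hbdet := isUnit_det_of_mem_Nminus ⟨hbl, hb1⟩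
  have hXY' : b⁻¹ * X * (Y * b) = diagonal (X * Y).diag := by
    rw [Matrix.mul_assoc, ← Matrix.mul_assoc X, hAb,
      nonsing_inv_mul_cancel_left _ _ hbdet]
  have hYX' : Y * b * (b⁻¹ * X) = Y * X := by
    rw [Matrix.mul_assoc, mul_nonsing_inv_cancel_left _ _ hbdet]
  obtain ⟨hXs, hYs⟩ := support_of_mul_eq_diagonal hXY' (hYX' ▸ upperTri_iff.1 hB) h0 hdinj
    (π := π) (hYX' ▸ hπ)
  obtain ⟨c, hc, s, t, hst, hXc, hcY⟩ := exists_mem_Nplus_of_mul_eq_diagonal h0 hXY' hXs hYs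
  have hcdet := isUnit_det_of_mem_Nplus hc
  have hst' (i : Fin m) : s i * t i = (X * Y) i i := congrFun hst i
  refine ⟨b, ⟨hbl, hb1⟩, c, hc, s, t, fun i => ?_, fun i i' h => ?_, ?_, ?_⟩
  · rw [hst']
    exact h0 i
  · rw [hst', hst']
    exact hd i i' h
  · rw [← hXc, ← Matrix.mul_assoc, mul_nonsing_inv_cancel_left _ _ hbdet,
      mul_nonsing_inv_cancel_right _ _ hcdet]
  · rw [hcY, mul_nonsing_inv_cancel_right _ _ hbdet]

end LowerUpper

theorem Eopen_eq_general (m n : ℕ) (π : Fin m ↪ Fin n) :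
    Eopen π = { p | p ∈ LU m n ∧ (∀ i : Fin m, (p.2 * p.1) (π i) (π i) = (p.1 * p.2) i i) ∧
      (∀ i : Fin m, (p.1 * p.2) i i ≠ 0) ∧
      (∀ i i' : Fin m, i ≠ i' → (p.1 * p.2) i i ≠ (p.1 * p.2) i' i') } := by
  ext p
  exact ⟨mem_LU_and_diag_of_mem_Eopen π, fun ⟨⟨hA, hB⟩, hπ, h0, hd⟩ => mem_Eopen_of_diag_eq π hA hB hπ h0 hd⟩

/-- Lemma: `E°_π` equals the set of `(X,Y) ∈ E` with `(YX)_{π(i)π(i)} = (XY)_{ii}` for all `i`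
and the `(XY)_{ii}` pairwise distinct and nonzero. -/
theorem Eopen_eq (m n : ℕ) (hm : 1 ≤ m) (hmn : m ≤ n) (π : Fin m ↪ Fin n) :
    Eopen π = { p | p ∈ LU m n ∧ (∀ i : Fin m, (p.2 * p.1) (π i) (π i) = (p.1 * p.2) i i) ∧
      (∀ i : Fin m, (p.1 * p.2) i i ≠ 0) ∧
      (∀ i i' : Fin m, i ≠ i' → (p.1 * p.2) i i ≠ (p.1 * p.2) i' i') } :=
  Eopen_eq_general m n π
end

section
/- Let 1 ≤ m ≤ n, let π be an m×n partial permutation matrix of maximal rank (π πᵀ = I_m), and let s, t be invertible diagonal m×m complex matrices such that the m products s_{ii} t_{ii} are pairwise distinct. Suppose A_- is a strictly lower triangular m×m complex matrix and A_+ is a strictly upper triangular n×n complex matrix satisfying A_- s π − s π A_+ = 0 and A_+ πᵀ t − πᵀ t A_- = 0. Then A_- = 0, π A_+ = 0 and A_+ πᵀ = 0; consequently the complex vector space of such pairs (A_-, A_+) has dimension (n−m)(n−m−1)/2. -/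
/-!
From `π πᵀ = 1` the two relations give `A₋ (sπ)(πᵀt) = (sπ)(πᵀt) A₋` with
`(sπ)(πᵀt) = diag(s t)`; since the `sᵢ tᵢ` are distinct, `A₋` is diagonal, hence zero as it is
strictly lower triangular. Then `sπ A₊ = 0` and `A₊ πᵀt = 0`, so `π A₊ = 0` and `A₊ πᵀ = 0` as `s`
and `t` are invertible. A `0-1` matrix with `π πᵀ = 1` picks distinct columns `c 1, …, c m`, so
these conditions say that `A₊` vanishes on the rows and columns `c i`: the solutions are the
strictly upper triangular matrices supported on the remaining `n - m` indices.
-/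

open Matrix

/-- The space of pairs `(A_-, A_+)` of a strictly lower triangular `m×m` matrix and a strictly
upper triangular `n×n` matrix satisfying `A_- sπ = sπ A_+` and `A_+ πᵀt = πᵀt A_-`. -/
noncomputable def stabSpace (m n : ℕ) (π : Matrix (Fin m) (Fin n) ℂ) (s t : Fin m → ℂ) :
    Submodule ℂ (Matrix (Fin m) (Fin m) ℂ × Matrix (Fin n) (Fin n) ℂ) where
  carrier := { A | (∀ i j : Fin m, i ≤ j → A.1 i j = 0) ∧
      (∀ i j : Fin n, j ≤ i → A.2 i j = 0) ∧
      A.1 * (Matrix.diagonal s * π) = (Matrix.diagonal s * π) * A.2 ∧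
      A.2 * (πᵀ * Matrix.diagonal t) = (πᵀ * Matrix.diagonal t) * A.1 }
  add_mem' := by
    rintro a b ⟨ha1, ha2, ha3, ha4⟩ ⟨hb1, hb2, hb3, hb4⟩
    refine ⟨?_, ?_, ?_, ?_⟩
    · intro i j h; show a.1 i j + b.1 i j = 0; rw [ha1 i j h, hb1 i j h, add_zero]
    · intro i j h; show a.2 i j + b.2 i j = 0; rw [ha2 i j h, hb2 i j h, add_zero]
    · show (a.1 + b.1) * _ = _ * (a.2 + b.2)
      rw [Matrix.add_mul, Matrix.mul_add, ha3, hb3]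
    · show (a.2 + b.2) * _ = _ * (a.1 + b.1)
      rw [Matrix.add_mul, Matrix.mul_add, ha4, hb4]
  zero_mem' := by
    refine ⟨fun _ _ _ => rfl, fun _ _ _ => rfl, ?_, ?_⟩
    · show (0 : Matrix (Fin m) (Fin m) ℂ) * _ = _ * (0 : Matrix (Fin n) (Fin n) ℂ)
      rw [Matrix.zero_mul, Matrix.mul_zero]
    · show (0 : Matrix (Fin n) (Fin n) ℂ) * _ = _ * (0 : Matrix (Fin m) (Fin m) ℂ)
      rw [Matrix.zero_mul, Matrix.mul_zero]
  smul_mem' := by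
    rintro c a ⟨ha1, ha2, ha3, ha4⟩
    refine ⟨?_, ?_, ?_, ?_⟩
    · intro i j h; show c * a.1 i j = 0; rw [ha1 i j h, mul_zero]
    · intro i j h; show c * a.2 i j = 0; rw [ha2 i j h, mul_zero]
    · show (c • a.1) * _ = _ * (c • a.2)
      rw [Matrix.smul_mul, Matrix.mul_smul, ha3]
    · show (c • a.2) * _ = _ * (c • a.1)
      rw [Matrix.smul_mul, Matrix.mul_smul, ha4]

open Finset Function

variable {R ι κ ν : Type*}

namespace Matrix

theorem apply_eq_zero_of_mul_diagonal_eq [CommRing R] [NoZeroDivisors R] [Fintype ι]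
    [DecidableEq ι] {d : ι → R} (hd : Injective d) {A : Matrix ι ι R}
    (hA : A * diagonal d = diagonal d * A) {i j : ι} (hij : i ≠ j) : A i j = 0 := by
  have h : A i j * d j = d i * A i j := by
    simpa only [mul_diagonal, diagonal_mul] using congr_fun₂ hA i j
  have h' : A i j * (d j - d i) = 0 := by rw [mul_sub, h, mul_comm, sub_self]
  exact (mul_eq_zero.mp h').resolve_right (sub_ne_zero.mpr (hd.ne hij.symm))

theorem mul_comm_mul_of_intertwine [Semiring R] [Fintype ι] [Fintype κ] {A : Matrix ι ι R}
    {B : Matrix κ κ R} {P : Matrix ι κ R} {Q : Matrix κ ι R}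
    (hP : A * P = P * B) (hQ : B * Q = Q * A) : A * (P * Q) = P * Q * A := by
  rw [← Matrix.mul_assoc, hP, Matrix.mul_assoc, hQ, Matrix.mul_assoc]

theorem eq_zero_and_mul_eq_zero_of_intertwine [CommRing R] [NoZeroDivisors R] [Fintype ι]
    [DecidableEq ι] [Fintype κ] {π : Matrix ι κ R} (hπ : π * πᵀ = 1) {s t : ι → R}
    (hs : ∀ i, s i ≠ 0) (ht : ∀ i, t i ≠ 0) (hst : Injective (s * t))
    {Am : Matrix ι ι R} {An : Matrix κ κ R} (hAm : ∀ i, Am i i = 0)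
    (h1 : Am * (diagonal s * π) = diagonal s * π * An)
    (h2 : An * (πᵀ * diagonal t) = πᵀ * diagonal t * Am) :
    Am = 0 ∧ π * An = 0 ∧ An * πᵀ = 0 := by
  have hPQ : diagonal s * π * (πᵀ * diagonal t) = diagonal (s * t) := by
    rw [Matrix.mul_assoc, ← Matrix.mul_assoc π, hπ, Matrix.one_mul, diagonal_mul_diagonal]
    rfl
  obtain rfl : Am = 0 := by
    ext i j
    obtain rfl | hij := eq_or_ne i j
    · exact hAm i
    · exact apply_eq_zero_of_mul_diagonal_eq hst (hPQ ▸ mul_comm_mul_of_intertwine h1 h2) hij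
  refine ⟨rfl, ?_, ?_⟩
  · have h : diagonal s * (π * An) = 0 := by rw [← Matrix.mul_assoc, ← h1, Matrix.zero_mul]
    ext k j
    simpa [diagonal_mul, hs k] using congr_fun₂ h k j
  · have h : An * πᵀ * diagonal t = 0 := by rw [Matrix.mul_assoc, h2, Matrix.mul_zero]
    ext i k
    simpa [mul_diagonal, ht k] using congr_fun₂ h i k

theorem mul_transpose_apply_of_zero_one [NonAssocSemiring R] [Fintype κ] [DecidableEq R]
    {π : Matrix ι κ R} (h01 : ∀ i j, π i j = 0 ∨ π i j = 1) (i i' : ι) :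
    (π * πᵀ) i i' = #{j | π i j = 1 ∧ π i' j = 1} := by
  rw [mul_apply, ← sum_boole]
  refine sum_congr rfl fun j _ => ?_
  rcases h01 i j with h | h <;> rcases h01 i' j with h' | h' <;> simp [h, h']

theorem exists_injective_eq_one_submatrix [NonAssocSemiring R] [CharZero R] [Fintype κ]
    [DecidableEq ι] [DecidableEq κ] {π : Matrix ι κ R} (h01 : ∀ i j, π i j = 0 ∨ π i j = 1)
    (hπ : π * πᵀ = 1) : ∃ c : ι → κ, Injective c ∧ π = (1 : Matrix κ κ R).submatrix c id := by
  classical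
  have hcard := mul_transpose_apply_of_zero_one h01
  have hrow (i : ι) : ∃ j, ({j' | π i j' = 1} : Finset κ) = {j} := by
    apply card_eq_one.mp
    simpa [hπ] using (hcard i i).symm
  choose c hc using hrow
  have hπc (i : ι) (j : κ) : π i j = 1 ↔ c i = j := by
    simpa [eq_comm] using Finset.ext_iff.mp (hc i) j
  refine ⟨c, fun i i' hii' => by_contra fun hne => ?_, ?_⟩
  · have h := hcard i i'
    rw [hπ, one_apply_ne hne, eq_comm, Nat.cast_eq_zero, card_eq_zero,
      filter_eq_empty_iff] at h
    exact h (mem_univ (c i)) ⟨(hπc i _).mpr rfl, (hπc i' _).mpr hii'.symm⟩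
  · ext i j
    rw [submatrix_apply, id, one_apply]
    rcases h01 i j with h | h <;> simp [h, ← hπc]

theorem one_submatrix_id_mul [NonAssocSemiring R] [Fintype κ] [DecidableEq κ] (c : ι → κ)
    (B : Matrix κ ν R) : (1 : Matrix κ κ R).submatrix c id * B = B.submatrix c id := by
  simpa using one_submatrix_mul c (Equiv.refl κ) B

theorem mul_transpose_one_submatrix_id [NonAssocSemiring R] [Fintype κ] [DecidableEq κ]
    (c : ι → κ) (B : Matrix ν κ R) :
    B * ((1 : Matrix κ κ R).submatrix c id)ᵀ = B.submatrix id c := by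
  simpa using mul_submatrix_one (Equiv.refl κ) c B

theorem strictUpper_and_submatrix_eq_zero_iff [Zero R] [Fintype ι] [LinearOrder κ]
    [Fintype κ] (c : ι → κ) (B : Matrix κ κ R) :
    ((∀ i j, j ≤ i → B i j = 0) ∧ B.submatrix c id = 0 ∧ B.submatrix id c = 0) ↔
      ∀ i j, (i, j) ∉ ({p ∈ (univ.image c)ᶜ ×ˢ (univ.image c)ᶜ | p.1 < p.2} : Finset _) →
        B i j = 0 := by
  simp only [mem_filter, mem_product, mem_compl, mem_image, mem_univ, true_and, not_and,
    not_exists, not_lt, ← Matrix.ext_iff, submatrix_apply, id, zero_apply]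
  constructor
  · rintro ⟨hupper, hrow, hcol⟩ i j h
    by_cases hi : ∃ k, c k = i
    · obtain ⟨k, rfl⟩ := hi
      exact hrow k j
    by_cases hj : ∃ k, c k = j
    · obtain ⟨k, rfl⟩ := hj
      exact hcol i k
    exact hupper i j (h ⟨not_exists.mp hi, not_exists.mp hj⟩)
  · intro h
    exact ⟨fun i j hji => h i j fun _ => hji, fun k j => h _ j fun hij => (hij.1 k rfl).elim,
      fun i k => h i _ fun hij => (hij.2 k rfl).elim⟩

end Matrix

theorem finrank_eq_card_of_mem_iff_supported {K M : Type*} [Field K] [AddCommGroup M]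
    [Module K M] [Fintype ι] [Fintype κ] (S : Finset (ι × κ))
    (V : Submodule K (M × Matrix ι κ K))
    (hV : ∀ A, A ∈ V ↔ A.1 = 0 ∧ ∀ i j, (i, j) ∉ S → A.2 i j = 0) :
    Module.finrank K V = #S := by
  classical
  let e : V ≃ₗ[K] (S → K) :=
    { toFun := fun A p => (A : M × Matrix ι κ K).2 p.1.1 p.1.2
      map_add' := fun _ _ => rfl
      map_smul' := fun _ _ => rfl
      invFun := fun g => ⟨(0, Matrix.of fun i j => if h : (i, j) ∈ S then g ⟨_, h⟩ else 0),
        (hV _).2 ⟨rfl, fun _ _ h => dif_neg h⟩⟩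
      left_inv := fun A => by
        obtain ⟨h0, hS⟩ := (hV A).1 A.2
        refine Subtype.ext (Prod.ext h0.symm (Matrix.ext fun i j => ?_))
        by_cases h : (i, j) ∈ S
        · exact dif_pos h
        · exact (dif_neg h).trans (hS i j h).symm
      right_inv := fun g => funext fun p => dif_pos p.2 }
  rw [e.finrank_eq, Module.finrank_fintype_fun_eq_card, Fintype.card_coe]

theorem mem_stabSpace_iff {m n : ℕ} {π : Matrix (Fin m) (Fin n) ℂ} (hπ : π * πᵀ = 1)
    {s t : Fin m → ℂ} (hs : ∀ i, s i ≠ 0) (ht : ∀ i, t i ≠ 0) (hst : Injective (s * t))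
    {A : Matrix (Fin m) (Fin m) ℂ × Matrix (Fin n) (Fin n) ℂ} :
    A ∈ stabSpace m n π s t ↔
      A.1 = 0 ∧ (∀ i j, j ≤ i → A.2 i j = 0) ∧ π * A.2 = 0 ∧ A.2 * πᵀ = 0 := by
  constructor
  · rintro ⟨hlower, hupper, h1, h2⟩
    obtain ⟨h0, hrow, hcol⟩ :=
      eq_zero_and_mul_eq_zero_of_intertwine hπ hs ht hst (fun i => hlower i i le_rfl) h1 h2
    exact ⟨h0, hupper, hrow, hcol⟩
  · rintro ⟨h0, hupper, hrow, hcol⟩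
    refine ⟨by simp [h0], hupper, ?_, ?_⟩
    · rw [h0, Matrix.zero_mul, Matrix.mul_assoc, hrow, Matrix.mul_zero]
    · rw [h0, Matrix.mul_zero, ← Matrix.mul_assoc, hcol, Matrix.zero_mul]

theorem stabilizer_computation_general (m n : ℕ)
    (π : Matrix (Fin m) (Fin n) ℂ)
    (hπ01 : ∀ i j, π i j = 0 ∨ π i j = 1)
    (hπ : π * πᵀ = 1)
    (s t : Fin m → ℂ) (hs : ∀ i, s i ≠ 0) (ht : ∀ i, t i ≠ 0)
    (hdist : ∀ i i' : Fin m, i ≠ i' → s i * t i ≠ s i' * t i')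
    (Am : Matrix (Fin m) (Fin m) ℂ) (An : Matrix (Fin n) (Fin n) ℂ)
    (hAm : ∀ i j : Fin m, i ≤ j → Am i j = 0)
    (h1 : Am * (Matrix.diagonal s * π) = (Matrix.diagonal s * π) * An)
    (h2 : An * (πᵀ * Matrix.diagonal t) = (πᵀ * Matrix.diagonal t) * Am) :
    (Am = 0 ∧ π * An = 0 ∧ An * πᵀ = 0) ∧
    Module.finrank ℂ (stabSpace m n π s t) = (n - m) * (n - m - 1) / 2 := by
  have hst : Injective (s * t) := fun i i' h => by_contra fun hne => hdist i i' hne h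
  refine ⟨eq_zero_and_mul_eq_zero_of_intertwine hπ hs ht hst (fun i => hAm i i le_rfl) h1 h2, ?_⟩
  obtain ⟨c, hc, rfl⟩ := exists_injective_eq_one_submatrix hπ01 hπ
  rw [finrank_eq_card_of_mem_iff_supported _ _ fun A => ?_, card_product_filter_lt, card_compl,
    card_image_of_injective _ hc, card_univ, Fintype.card_fin, Fintype.card_fin,
    Nat.choose_two_right]
  rw [mem_stabSpace_iff hπ hs ht hst, one_submatrix_id_mul, mul_transpose_one_submatrix_id,
    strictUpper_and_submatrix_eq_zero_iff]

/-- Infinitesimal stabilizer computation: for maximal-rank `π` and generic diagonal `s`, `t`,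
the equations force `A_- = 0`, `π A_+ = 0`, `A_+ πᵀ = 0`, and the solution space has
dimension `(n−m)(n−m−1)/2`. -/
theorem stabilizer_computation (m n : ℕ) (hm : 1 ≤ m) (hmn : m ≤ n)
    (π : Matrix (Fin m) (Fin n) ℂ)
    (hπ01 : ∀ i j, π i j = 0 ∨ π i j = 1)
    (hπ : π * πᵀ = 1)
    (s t : Fin m → ℂ) (hs : ∀ i, s i ≠ 0) (ht : ∀ i, t i ≠ 0)
    (hdist : ∀ i i' : Fin m, i ≠ i' → s i * t i ≠ s i' * t i')
    (Am : Matrix (Fin m) (Fin m) ℂ) (An : Matrix (Fin n) (Fin n) ℂ)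
    (hAm : ∀ i j : Fin m, i ≤ j → Am i j = 0)
    (hAn : ∀ i j : Fin n, j ≤ i → An i j = 0)
    (h1 : Am * (Matrix.diagonal s * π) = (Matrix.diagonal s * π) * An)
    (h2 : An * (πᵀ * Matrix.diagonal t) = (πᵀ * Matrix.diagonal t) * Am) :
    (Am = 0 ∧ π * An = 0 ∧ An * πᵀ = 0) ∧
    Module.finrank ℂ (stabSpace m n π s t) = (n - m) * (n - m - 1) / 2 :=
  stabilizer_computation_general m n π hπ01 hπ s t hs ht hdist Am An hAm h1 h2
end

section
/- Let R be a commutative ring, X an m×n matrix and Y an n×m matrix with entries in R, and p ∈ R[T] a polynomial. Then Y · p(XY) · X = q(YX), where q(T) := T·p(T), and p(XY) (resp. q(YX)) denotes the evaluation of the polynomial p (resp. q) at the square matrix XY (resp. YX). In particular, if XY satisfies the polynomial p, then YX satisfies the polynomial q. -/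
/-- For matrices `X : m×n`, `Y : n×m` over a commutative ring and a polynomial `p`,
`Y · p(XY) · X = q(YX)` where `q(T) = T·p(T)`; in particular if `XY` satisfies `p`
then `YX` satisfies `q`. -/
theorem Y_polyEval_X (R : Type*) [CommRing R] (m n : ℕ)
    (X : Matrix (Fin m) (Fin n) R) (Y : Matrix (Fin n) (Fin m) R) (p : Polynomial R) :
    Y * Polynomial.aeval (X * Y) p * X = Polynomial.aeval (Y * X) (Polynomial.X * p) ∧
    (Polynomial.aeval (X * Y) p = 0 → Polynomial.aeval (Y * X) (Polynomial.X * p) = 0) := by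
  have key : Y * Polynomial.aeval (X * Y) p * X =
      Polynomial.aeval (Y * X) (Polynomial.X * p) := by
    induction p using Polynomial.induction_on' with
    | add p q hp hq =>
        rw [map_add, mul_add, Matrix.mul_add, Matrix.add_mul, hp, hq, map_add]
    | monomial k a =>
        have hpow : ∀ j : ℕ, Y * (X * Y) ^ j * X = (Y * X) ^ (j + 1) := by
          intro j
          induction j with
          | zero => simp
          | succ j ih =>
              calc Y * (X * Y) ^ (j + 1) * X = (Y * X) * (Y * (X * Y) ^ j * X) := by
                    rw [pow_succ']
                    simp only [Matrix.mul_assoc]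
              _ = (Y * X) ^ (j + 2) := by rw [ih, ← pow_succ']
        rw [Polynomial.X_mul_monomial]
        simp only [Polynomial.aeval_monomial]
        rw [Algebra.algebraMap_eq_smul_one, Algebra.algebraMap_eq_smul_one,
          smul_mul_assoc, one_mul, smul_mul_assoc, one_mul,
          Matrix.mul_smul, Matrix.smul_mul, hpow]
  exact ⟨key, fun h => by rw [← key, h, Matrix.mul_zero, Matrix.zero_mul]⟩
end

section
/- Let X ∈ Mat_{m×n}(ℂ) and Y ∈ Mat_{n×m}(ℂ). If the m×m matrix XY is invertible and diagonalizable, then the n×n matrix YX is diagonalizable. -/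
/-!
`Y` maps each eigenvector of `XY` with eigenvalue `μ` to an eigenvector of `YX` with eigenvalue `μ`
(or to zero), and `ker X` lies in the `0`-eigenspace of `YX`. Since `XY` is invertible,
`ℂⁿ = ker X + range Y`: write `v = (v - Y w) + Y w` with `XY w = X v`. Hence the eigenspaces of `YX`
span `ℂⁿ`, and a basis of eigenvectors diagonalizes `YX`.
-/

open Module Matrix

namespace LinearMap

variable {R V W : Type*} [CommRing R] [AddCommGroup V] [Module R V] [AddCommGroup W] [Module R W]
  (f : V →ₗ[R] W) (g : W →ₗ[R] V)

theorem ker_sup_range_eq_top_of_surjective_comp (hfg : Function.Surjective (f ∘ₗ g)) :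
    ker f ⊔ range g = ⊤ := by
  refine eq_top_iff.2 fun v _ ↦ ?_
  obtain ⟨w, hw⟩ := hfg (f v)
  refine Submodule.mem_sup.2 ⟨v - g w, ?_, g w, mem_range_self g w, sub_add_cancel v (g w)⟩
  simpa [sub_eq_zero] using hw.symm

theorem map_eigenspace_comp_le (μ : R) :
    (End.eigenspace (f ∘ₗ g) μ).map g ≤ End.eigenspace (g ∘ₗ f) μ := by
  rintro _ ⟨w, hw, rfl⟩
  rw [SetLike.mem_coe, End.mem_eigenspace_iff] at hw
  rw [End.mem_eigenspace_iff, comp_apply, ← comp_apply f g, hw, map_smul]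

theorem iSup_eigenspace_comp_eq_top (hfg : Function.Surjective (f ∘ₗ g))
    (h : ⨆ μ, End.eigenspace (f ∘ₗ g) μ = ⊤) : ⨆ μ, End.eigenspace (g ∘ₗ f) μ = ⊤ := by
  have hker : ker f ≤ ⨆ μ, End.eigenspace (g ∘ₗ f) μ := fun v hv ↦
    le_iSup (End.eigenspace (g ∘ₗ f)) 0 <| by simp_all
  have hrange : range g ≤ ⨆ μ, End.eigenspace (g ∘ₗ f) μ := by
    rw [← Submodule.map_top, ← h, Submodule.map_iSup]
    exact iSup_mono (map_eigenspace_comp_le f g)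
  rw [eq_top_iff, ← ker_sup_range_eq_top_of_surjective_comp f g hfg]
  exact sup_le hker hrange

end LinearMap

namespace Module.End

variable {K V : Type*} [Field K] [AddCommGroup V] [Module K V]

theorem exists_basis_of_iSup_eigenspace_eq_top {f : End K V} (h : ⨆ μ, f.eigenspace μ = ⊤) :
    ∃ (s : Set V) (b : Basis s K V) (μ : s → K), ∀ i, f (b i) = μ i • b i := by
  obtain ⟨s, hs, hspan, hli⟩ := exists_linearIndependent K (⋃ μ, (f.eigenspace μ : Set V))
  have htop : ⊤ ≤ Submodule.span K (Set.range ((↑) : s → V)) := by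
    rw [Subtype.range_coe, hspan, Submodule.span_iUnion, ← h]
    simp only [Submodule.span_eq, le_refl]
  refine ⟨s, Basis.mk hli htop, fun i ↦ (Set.mem_iUnion.1 (hs i.2)).choose, fun i ↦ ?_⟩
  rw [Basis.mk_apply, ← mem_eigenspace_iff]
  exact (Set.mem_iUnion.1 (hs i.2)).choose_spec

end Module.End

namespace Matrix

variable {n R K : Type*} [Fintype n] [DecidableEq n]

def IsDiagonalizable [CommRing R] (M : Matrix n n R) : Prop :=
  ∃ P : Matrix n n R, IsUnit P ∧ (P⁻¹ * M * P).IsDiag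

theorem IsDiagonalizable.iSup_eigenspace_eq_top [CommRing R] {M : Matrix n n R}
    (hM : M.IsDiagonalizable) : ⨆ μ, End.eigenspace (toLin' M) μ = ⊤ := by
  obtain ⟨P, hP, hD⟩ := hM
  set d := (P⁻¹ * M * P).diag
  have hMP : M * P = P * diagonal d := by
    rw [hD.diagonal_diag, ← Matrix.mul_assoc, ← Matrix.mul_assoc,
      mul_nonsing_inv _ ((isUnit_iff_isUnit_det P).1 hP), Matrix.one_mul]
  have hcol : ∀ j, P.col j ∈ End.eigenspace (toLin' M) (d j) := fun j ↦ by
    rw [End.mem_eigenspace_iff, toLin'_apply]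
    ext i
    exact (congrFun (congrFun hMP i) j).trans (by simp [mul_comm])
  rw [eq_top_iff, ← (LinearMap.range_eq_top (f := toLin' P)).2 (mulVec_surjective_iff_isUnit.2 hP),
    range_toLin', Submodule.span_le]
  rintro _ ⟨j, rfl⟩
  exact le_iSup (End.eigenspace (toLin' M)) (d j) (hcol j)

theorem isDiagonalizable_of_basis_eigenvectors [Field K] {M : Matrix n n K}
    (b : Basis n K (n → K)) (μ : n → K) (hb : ∀ j, M *ᵥ b j = μ j • b j) :
    M.IsDiagonalizable := by
  let Q := (Pi.basisFun K n).toMatrix b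
  have hQinv : Q⁻¹ = b.toMatrix (Pi.basisFun K n) :=
    inv_eq_left_inv (b.toMatrix_mul_toMatrix_flip _)
  let := (Pi.basisFun K n).invertibleToMatrix b
  refine ⟨Q, isUnit_of_invertible Q, ?_⟩
  have hconj : Q⁻¹ * M * Q = LinearMap.toMatrix b b (toLin' M) := by
    rw [hQinv, ← basis_toMatrix_mul_linearMap_toMatrix_mul_basis_toMatrix b (Pi.basisFun K n) b
        (Pi.basisFun K n),
      LinearMap.toMatrix_eq_toMatrix', LinearMap.toMatrix'_toLin']
  rw [hconj]
  intro i j hij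
  rw [LinearMap.toMatrix_apply, toLin'_apply, hb, map_smul, b.repr_self, Finsupp.smul_apply,
    Finsupp.single_eq_of_ne hij, smul_zero]

theorem isDiagonalizable_of_iSup_eigenspace_eq_top [Field K] {M : Matrix n n K}
    (h : ⨆ μ, End.eigenspace (toLin' M) μ = ⊤) : M.IsDiagonalizable := by
  obtain ⟨s, b, μ, hb⟩ := End.exists_basis_of_iSup_eigenspace_eq_top h
  let e := b.indexEquiv (Pi.basisFun K n)
  exact isDiagonalizable_of_basis_eigenvectors (b.reindex e) (μ ∘ e.symm) fun j ↦ by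
    simpa using hb (e.symm j)

end Matrix

/-- If `XY` is invertible and diagonalizable then `YX` is diagonalizable. -/
theorem YX_diagonalizable (m n : ℕ)
    (X : Matrix (Fin m) (Fin n) ℂ) (Y : Matrix (Fin n) (Fin m) ℂ)
    (hinv : IsUnit (X * Y))
    (hdiag : ∃ P : Matrix (Fin m) (Fin m) ℂ, IsUnit P ∧ (P⁻¹ * (X * Y) * P).IsDiag) :
    ∃ Q : Matrix (Fin n) (Fin n) ℂ, IsUnit Q ∧ (Q⁻¹ * (Y * X) * Q).IsDiag := by
  have hsurj : Function.Surjective (toLin' X ∘ₗ toLin' Y) := by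
    rw [← toLin'_mul]
    exact mulVec_surjective_iff_isUnit.2 hinv
  have hXY : ⨆ μ, End.eigenspace (toLin' X ∘ₗ toLin' Y) μ = ⊤ := by
    rw [← toLin'_mul]
    exact IsDiagonalizable.iSup_eigenspace_eq_top hdiag
  have hYX := LinearMap.iSup_eigenspace_comp_eq_top _ _ hsurj hXY
  rw [← toLin'_mul] at hYX
  exact isDiagonalizable_of_iSup_eigenspace_eq_top hYX
end

section
/- For k ≥ 1 let γ_k denote the k×k antidiagonal permutation matrix, (γ_k)_{ij} = 1 iff i + j = k+1, and define ι(X,Y) := (γ_m Yᵀ γ_n, γ_n Xᵀ γ_m) for (X,Y) ∈ Mat_{m×n}(ℂ) × Mat_{n×m}(ℂ). Then ι is an involution; (X,Y) ∈ E if and only if ι(X,Y) ∈ E; and for every π ∈ S_{m,n} one has ι(E°_π) = E°_{γ_n π γ_m}, where γ_n π γ_m ∈ S_{m,n} denotes the map i ↦ n+1−π(m+1−i). Consequently ι maps E_π bijectively onto E_{γ_n π γ_m}. -/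
open Matrix

/-- The antidiagonal permutation matrix `γ_k`. -/
noncomputable def gam (k : ℕ) : Matrix (Fin k) (Fin k) ℂ :=
  fun i j => if (i : ℕ) + (j : ℕ) = k - 1 then 1 else 0

/-- The involution `ι(X,Y) = (γ_m Yᵀ γ_n, γ_n Xᵀ γ_m)`. -/
noncomputable def iotaLU {m n : ℕ} (p : LUSpace m n) : LUSpace m n :=
  (gam m * p.2ᵀ * gam n, gam n * p.1ᵀ * gam m)

/-- The element `γ_n π γ_m ∈ S_{m,n}`: `i ↦ n+1−π(m+1−i)` (in `Fin`-indexing, `i ↦ rev (π (rev i))`). -/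
def revConj {m n : ℕ} (π : Fin m ↪ Fin n) : Fin m ↪ Fin n :=
  ⟨fun i => (π i.rev).rev, fun a b h =>
    Fin.rev_injective (π.injective (Fin.rev_injective h))⟩

/-!
The antidiagonal flip `M ↦ γ Mᵀ γ`, entrywise `M i j ↦ M (rev j) (rev i)`, is an involutive
anti-automorphism of matrix multiplication preserving lower and upper (uni)triangularity, and
`ι(X, Y)` is the pair of flips of `Y` and `X`. Hence `ι` turns `XY` and `YX` into the flips of
`XY` and `YX`, and a factorisation `(b sπ c⁻¹, c πᵀt b⁻¹)` into `(b' s'π' c'⁻¹, c' π'ᵀt' b'⁻¹)` with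
`b' = flip b⁻¹`, `c' = flip c⁻¹`, `s' = t ∘ rev`, `t' = s ∘ rev` and `π' = γ_n π γ_m`.
On coordinates `ι` is a permutation of the variables, so it commutes with Zariski closure.
-/

open Set Function

section Antitranspose

variable {α : Type*} {k l p : ℕ}

def antitranspose (M : Matrix (Fin k) (Fin l) α) : Matrix (Fin l) (Fin k) α :=
  Mᵀ.submatrix Fin.rev Fin.rev

@[simp]
lemma antitranspose_apply (M : Matrix (Fin k) (Fin l) α) (i : Fin l) (j : Fin k) :
    antitranspose M i j = M j.rev i.rev := rfl

@[simp]
lemma antitranspose_antitranspose (M : Matrix (Fin k) (Fin l) α) :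
    antitranspose (antitranspose M) = M := by
  ext; simp

lemma antitranspose_transpose (M : Matrix (Fin k) (Fin l) α) :
    antitranspose Mᵀ = (antitranspose M)ᵀ := rfl

lemma antitranspose_mul [CommSemiring α] (M : Matrix (Fin k) (Fin l) α)
    (N : Matrix (Fin l) (Fin p) α) :
    antitranspose (M * N) = antitranspose N * antitranspose M := by
  rw [antitranspose, transpose_mul, submatrix_mul _ _ _ _ _ Fin.rev_bijective]
  rfl

lemma antitranspose_diagonal [Zero α] (d : Fin k → α) :
    antitranspose (diagonal d) = diagonal (d ∘ Fin.rev) := by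
  ext i j
  rcases eq_or_ne i j with rfl | h
  · simp
  · simp [h, diagonal_apply_ne _ (Fin.rev_injective.ne h.symm)]

lemma antitranspose_inv [CommRing α] (M : Matrix (Fin k) (Fin k) α) :
    antitranspose M⁻¹ = (antitranspose M)⁻¹ := by
  rw [antitranspose, transpose_nonsing_inv]
  exact (inv_submatrix_equiv _ Fin.revPerm Fin.revPerm).symm

end Antitranspose

lemma gam_apply {k : ℕ} (i j : Fin k) : gam k i j = if i.rev = j then 1 else 0 := by
  simp only [gam, Fin.ext_iff, Fin.val_rev]
  congr 1
  exact propext (by omega)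

lemma gam_mul_apply {k l : ℕ} (M : Matrix (Fin k) (Fin l) ℂ) (i : Fin k) (j : Fin l) :
    (gam k * M) i j = M i.rev j := by
  simp [mul_apply, gam_apply]

lemma mul_gam_apply {k l : ℕ} (M : Matrix (Fin k) (Fin l) ℂ) (i : Fin k) (j : Fin l) :
    (M * gam l) i j = M i j.rev := by
  simp [mul_apply, gam_apply, Fin.rev_eq_iff]

lemma iotaLU_eq {m n : ℕ} (q : LUSpace m n) :
    iotaLU q = (antitranspose q.2, antitranspose q.1) := by
  ext <;> simp [iotaLU, mul_gam_apply, gam_mul_apply]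

section Unitriangular

variable {ι R : Type*} [Fintype ι] [LinearOrder ι] [CommRing R]
  {M : Matrix ι ι R}

lemma Matrix.IsUpperTriangular.mul_apply_self {A B : Matrix ι ι R} (hA : A.IsUpperTriangular)
    (hB : B.IsUpperTriangular) (i : ι) : (A * B) i i = A i i * B i i := by
  rw [mul_apply, Finset.sum_eq_single i]
  · intro j _ hji
    rcases hji.lt_or_gt with h | h
    · rw [hA h, zero_mul]
    · rw [hB h, mul_zero]
  · simp

lemma Matrix.IsUpperTriangular.det_eq_one (hM : M.IsUpperTriangular) (hd : ∀ i, M i i = 1) :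
    M.det = 1 := by
  simp [det_of_isUpperTriangular hM, hd]

lemma Matrix.IsUpperTriangular.inv_unitriangular (hM : M.IsUpperTriangular)
    (hd : ∀ i, M i i = 1) : M⁻¹.IsUpperTriangular ∧ ∀ i, M⁻¹ i i = 1 := by
  have : Invertible M :=
    ((isUnit_iff_isUnit_det M).2 (by rw [hM.det_eq_one hd]; exact isUnit_one)).invertible
  have hinv : M⁻¹.IsUpperTriangular := blockTriangular_inv_of_blockTriangular hM
  refine ⟨hinv, fun i => ?_⟩
  have := congr_fun₂ (inv_mul_of_invertible M) i i
  rwa [hinv.mul_apply_self hM, hd, mul_one, one_apply_eq] at this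

end Unitriangular

section Triangular

variable {k : ℕ} {M : Matrix (Fin k) (Fin k) ℂ}

lemma upperTri_iff_isUpperTriangular : UpperTri M ↔ M.IsUpperTriangular :=
  ⟨fun h i j hij => h i j hij, fun h _ _ hij => h hij⟩

lemma mem_Nminus_iff_transpose_mem_Nplus : M ∈ Nminus k ↔ Mᵀ ∈ Nplus k :=
  ⟨fun h => ⟨fun i j hij => h.1 j i hij, h.2⟩,
    fun h => ⟨fun i j hij => h.1 j i hij, h.2⟩⟩

lemma det_eq_one_of_mem_Nplus (h : M ∈ Nplus k) : M.det = 1 :=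
  (upperTri_iff_isUpperTriangular.1 h.1).det_eq_one h.2

lemma det_eq_one_of_mem_Nminus (h : M ∈ Nminus k) : M.det = 1 := by
  rw [← det_transpose]
  exact det_eq_one_of_mem_Nplus (mem_Nminus_iff_transpose_mem_Nplus.1 h)

lemma inv_mem_Nplus (h : M ∈ Nplus k) : M⁻¹ ∈ Nplus k := by
  obtain ⟨htri, hdiag⟩ := (upperTri_iff_isUpperTriangular.1 h.1).inv_unitriangular h.2
  exact ⟨upperTri_iff_isUpperTriangular.2 htri, hdiag⟩

lemma inv_mem_Nminus (h : M ∈ Nminus k) : M⁻¹ ∈ Nminus k := by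
  rw [mem_Nminus_iff_transpose_mem_Nplus, transpose_nonsing_inv]
  exact inv_mem_Nplus (mem_Nminus_iff_transpose_mem_Nplus.1 h)

lemma lowerTri_antitranspose_iff : LowerTri (antitranspose M) ↔ LowerTri M := by
  refine ⟨fun h i j hij => ?_, fun h i j hij => h _ _ (Fin.rev_lt_rev.2 hij)⟩
  simpa using h j.rev i.rev (Fin.rev_lt_rev.2 hij)

lemma upperTri_antitranspose_iff : UpperTri (antitranspose M) ↔ UpperTri M := by
  refine ⟨fun h i j hij => ?_, fun h i j hij => h _ _ (Fin.rev_lt_rev.2 hij)⟩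
  simpa using h j.rev i.rev (Fin.rev_lt_rev.2 hij)

lemma antitranspose_mem_Nminus (h : M ∈ Nminus k) : antitranspose M ∈ Nminus k :=
  ⟨lowerTri_antitranspose_iff.2 h.1, fun i => h.2 i.rev⟩

lemma antitranspose_mem_Nplus (h : M ∈ Nplus k) : antitranspose M ∈ Nplus k :=
  ⟨upperTri_antitranspose_iff.2 h.1, fun i => h.2 i.rev⟩

end Triangular

section LowerUpper

variable {m n : ℕ}

lemma iotaLU_involutive : Involutive (iotaLU (m := m) (n := n)) := fun q => by
  simp [iotaLU_eq]

lemma iotaLU_mem_LU_iff (q : LUSpace m n) : iotaLU q ∈ LU m n ↔ q ∈ LU m n := by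
  rw [iotaLU_eq]
  exact and_congr (by rw [← antitranspose_mul, lowerTri_antitranspose_iff])
    (by rw [← antitranspose_mul, upperTri_antitranspose_iff])

@[simp]
lemma revConj_apply (π : Fin m ↪ Fin n) (i : Fin m) : revConj π i = (π i.rev).rev := rfl

lemma revConj_involutive : Involutive (revConj (m := m) (n := n)) := fun π => by
  ext i
  simp

lemma antitranspose_permMat (π : Fin m ↪ Fin n) :
    antitranspose (permMat π) = (permMat (revConj π))ᵀ := by
  ext i j
  simp [permMat, Fin.rev_eq_iff]

lemma mapsTo_iotaLU_Eopen (π : Fin m ↪ Fin n) :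
    MapsTo iotaLU (Eopen π) (Eopen (revConj π)) := by
  rintro ⟨X, Y⟩ ⟨b, hb, c, hc, s, t, hst, hdist, hX, hY⟩
  simp only at hX hY
  subst hX hY
  have hbb : b⁻¹⁻¹ = b := nonsing_inv_nonsing_inv b (by simp [det_eq_one_of_mem_Nminus hb])
  have hcc : c⁻¹⁻¹ = c := nonsing_inv_nonsing_inv c (by simp [det_eq_one_of_mem_Nplus hc])
  refine ⟨antitranspose b⁻¹, antitranspose_mem_Nminus (inv_mem_Nminus hb),
    antitranspose c⁻¹, antitranspose_mem_Nplus (inv_mem_Nplus hc), t ∘ Fin.rev, s ∘ Fin.rev,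
    fun i => by simpa [mul_comm] using hst i.rev,
    fun i i' h => by simpa [mul_comm] using hdist _ _ (Fin.rev_injective.ne h), ?_, ?_⟩ <;>
  simp only [iotaLU_eq, ← antitranspose_inv, hbb, hcc, antitranspose_mul, antitranspose_diagonal,
    antitranspose_transpose, antitranspose_permMat, transpose_transpose, Matrix.mul_assoc]

end LowerUpper

lemma Function.Involutive.bijOn_of_forall_mapsTo {α ι : Type*} {f : α → α} {σ : ι → ι}
    (hf : Involutive f) (hσ : Involutive σ) {A : ι → Set α}
    (h : ∀ i, MapsTo f (A i) (A (σ i)))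
    (i : ι) : BijOn f (A i) (A (σ i)) :=
  InvOn.bijOn ⟨fun x _ => hf x, fun x _ => hf x⟩ (h i) (by simpa [hσ i] using h (σ i))

lemma mapsTo_zclosure_image {m n m' n' : ℕ} {f : LUSpace m n → LUSpace m' n'}
    (σ : (Fin m' × Fin n') ⊕ (Fin n' × Fin m') → (Fin m × Fin n) ⊕ (Fin n × Fin m))
    (hf : ∀ q, coordsOf (f q) = coordsOf q ∘ σ) (S : Set (LUSpace m n)) :
    MapsTo f (zclosure S) (zclosure (f '' S)) := by
  intro q hq g hg
  have hrename : ∀ q, MvPolynomial.eval (coordsOf (f q)) g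
      = MvPolynomial.eval (coordsOf q) (MvPolynomial.rename σ g) := fun q => by
    rw [MvPolynomial.eval_rename, hf]
  rw [hrename]
  exact hq _ fun q' hq' => by rw [← hrename]; exact hg _ ⟨q', hq', rfl⟩

lemma coordsOf_iotaLU {m n : ℕ} (q : LUSpace m n) :
    coordsOf (iotaLU q) = coordsOf q ∘ Sum.elim (fun ij => .inr (ij.2.rev, ij.1.rev))
      (fun ji => .inl (ji.2.rev, ji.1.rev)) := by
  funext x
  rcases x with ⟨i, j⟩ | ⟨j, i⟩ <;> simp [iotaLU_eq, coordsOf]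

theorem iota_involution_general (m n : ℕ) :
    Function.Involutive (iotaLU (m := m) (n := n)) ∧
    (∀ p : LUSpace m n, p ∈ LU m n ↔ iotaLU p ∈ LU m n) ∧
    (∀ π : Fin m ↪ Fin n, iotaLU '' Eopen π = Eopen (revConj π)) ∧
    (∀ π : Fin m ↪ Fin n, Set.BijOn iotaLU (Ecomp π) (Ecomp (revConj π))) := by
  have hopen : ∀ π : Fin m ↪ Fin n, BijOn iotaLU (Eopen π) (Eopen (revConj π)) :=
    iotaLU_involutive.bijOn_of_forall_mapsTo revConj_involutive mapsTo_iotaLU_Eopen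
  refine ⟨iotaLU_involutive, fun q => (iotaLU_mem_LU_iff q).symm, fun π => (hopen π).image_eq,
    iotaLU_involutive.bijOn_of_forall_mapsTo revConj_involutive fun π => ?_⟩
  simpa only [Ecomp, (hopen π).image_eq] using
    mapsTo_zclosure_image _ coordsOf_iotaLU (Eopen π)

/-- `ι` is an involution, preserves `E`, sends `E°_π` to `E°_{γ_n π γ_m}`, and maps `E_π`
bijectively onto `E_{γ_n π γ_m}`. -/
theorem iota_involution (m n : ℕ) (hm : 1 ≤ m) (hmn : m ≤ n) :
    Function.Involutive (iotaLU (m := m) (n := n)) ∧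
    (∀ p : LUSpace m n, p ∈ LU m n ↔ iotaLU p ∈ LU m n) ∧
    (∀ π : Fin m ↪ Fin n, iotaLU '' Eopen π = Eopen (revConj π)) ∧
    (∀ π : Fin m ↪ Fin n, Set.BijOn iotaLU (Ecomp π) (Ecomp (revConj π))) :=
  iota_involution_general m n
end

section
/- For every β ∈ {⊤,⊥}^{m−1} and every π ∈ S_{m,n}, one has G_π^{(β_1,…,β_{m−1},⊤)} = G_π^{(β_1,…,β_{m−1},⊥)}; that is, the generic pipe dream polynomial G_π^β does not depend on the last letter of the hybridization β. -/
/-! # Hybrid generic pipe dreams -/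

/-- Tiles: sets of pipe segments in a unit cell. `wn` = {W–N}, `se` = {S–E},
`wnse` = {W–N, S–E}, `en` = {E–N}, `sw` = {S–W}, `ensw` = {E–N, S–W}, `we` = {W–E},
`sn` = {S–N}, `wesn` = {W–E, S–N} (crossing), `blank` = ∅. -/
inductive Tile
  | blank | wn | se | wnse | en | sw | ensw | we | sn | wesn
  deriving DecidableEq

instance : Fintype Tile where
  elems := {.blank, .wn, .se, .wnse, .en, .sw, .ensw, .we, .sn, .wesn}
  complete := fun x => by cases x <;> simp

namespace Tile

/-- The West edge is occupied. -/
def occW : Tile → Bool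
  | wn | wnse | we | wesn | sw | ensw => true
  | _ => false

/-- The East edge is occupied. -/
def occE : Tile → Bool
  | se | wnse | we | wesn | en | ensw => true
  | _ => false

/-- The North edge is occupied. -/
def occN : Tile → Bool
  | wn | wnse | sn | wesn | en | ensw => true
  | _ => false

/-- The South edge is occupied. -/
def occS : Tile → Bool
  | se | wnse | sn | wesn | sw | ensw => true
  | _ => false

/-- Elbow tiles. -/
def isElbow : Tile → Bool
  | wn | se | wnse | en | sw | ensw => true
  | _ => false

/-- Straight tiles. -/
def isStraight : Tile → Bool
  | we | sn | wesn => true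
  | _ => false

/-- Left-right mirror image of a tile (exchanging the roles of the E and W edges). -/
def mirror : Tile → Tile
  | wn => en | en => wn | se => sw | sw => se | wnse => ensw | ensw => wnse
  | t => t

end Tile

/-- The allowed tiles in a row of type `⊤` (`true`) resp. `⊥` (`false`). -/
def allowedIn (rt : Bool) (t : Tile) : Prop :=
  if rt then
    t = .blank ∨ t = .wn ∨ t = .se ∨ t = .wnse ∨ t = .we ∨ t = .sn ∨ t = .wesn
  else
    t = .blank ∨ t = .en ∨ t = .sw ∨ t = .ensw ∨ t = .we ∨ t = .sn ∨ t = .wesn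

section Routing

variable {ι : Type*}

/-- In a `⊤`-row tile, the pipe exiting East given the pipes entering from West and South. -/
def eOutT : Tile → Option ι → Option ι → Option ι
  | .se, _, s => s
  | .wnse, _, s => s
  | .we, w, _ => w
  | .wesn, w, _ => w
  | _, _, _ => none

/-- In a `⊤`-row tile, the pipe exiting North given the pipes entering from West and South. -/
def nOutT : Tile → Option ι → Option ι → Option ι
  | .wn, w, _ => w
  | .wnse, w, _ => w
  | .sn, _, s => s
  | .wesn, _, s => s
  | _, _, _ => none

/-- Tracing a `⊤`-type row left to right: the pipe on the vertical edge left of column `j`,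
where `bot j` is the pipe entering column `j` from the South and `enter` enters from the West. -/
def hTrace (t : ℕ → Tile) (bot : ℕ → Option ι) (enter : Option ι) : ℕ → Option ι
  | 0 => enter
  | j + 1 => eOutT (t j) (hTrace t bot enter j) (bot j)

/-- The pipe exiting North from column `j` of a `⊤`-type row. -/
def topOutT (t : ℕ → Tile) (bot : ℕ → Option ι) (enter : Option ι) (j : ℕ) : Option ι :=
  nOutT (t j) (hTrace t bot enter j) (bot j)

/-- The pipe exiting North from column `j` of a `⊥`-type row with `n` columns (the pipe
`enter` enters from the East); computed by mirroring. -/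
def topOutB (n : ℕ) (t : ℕ → Tile) (bot : ℕ → Option ι) (enter : Option ι) (j : ℕ) :
    Option ι :=
  topOutT (fun j' => (t (n - 1 - j')).mirror) (fun j' => bot (n - 1 - j')) enter (n - 1 - j)

/-- The pipe exiting North from column `j` of a row of type `rt`. -/
def rowTop (rt : Bool) (n : ℕ) (t : ℕ → Tile) (bot : ℕ → Option ι) (enter : Option ι)
    (j : ℕ) : Option ι :=
  if rt then topOutT t bot enter j else topOutB n t bot enter j

end Routing

/-- The row-`i` tiles of a filling, as a `ℕ`-indexed family. -/
def tilesOf {m n : ℕ} (f : Fin m → Fin n → Tile) (i : Fin m) : ℕ → Tile :=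
  fun j => if h : j < n then f i ⟨j, h⟩ else Tile.blank

/-- The pipes (labeled by the row in which they enter) crossing the horizontal line `m - r`
of the grid (so `r = 0` is the South boundary and `r = m` the North boundary). -/
def lineState (m n : ℕ) (β : Fin m → Bool) (f : Fin m → Fin n → Tile) :
    ℕ → ℕ → Option (Fin m)
  | 0, _ => none
  | r + 1, j =>
    if h : r < m then
      rowTop (β ⟨m - 1 - r, by omega⟩) n (tilesOf f ⟨m - 1 - r, by omega⟩)
        (fun j' => lineState m n β f r j') (some ⟨m - 1 - r, by omega⟩) j
    else lineState m n β f r j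

/-- The pipe exiting through the North boundary at column `j`. -/
def northExit (m n : ℕ) (β : Fin m → Bool) (f : Fin m → Fin n → Tile) (j : Fin n) :
    Option (Fin m) :=
  lineState m n β f m (j : ℕ)

private theorem filter_card_lt {m : ℕ} (i : Fin m) (p : Fin m → Prop) [DecidablePred p]
    (h : ∀ a, p a → a ≠ i) : (Finset.univ.filter p).card < m := by
  have hsub : Finset.univ.filter p ⊆ Finset.univ.erase i := fun a ha =>
    Finset.mem_erase.mpr ⟨h a (Finset.mem_filter.mp ha).2, Finset.mem_univ a⟩
  calc (Finset.univ.filter p).card ≤ (Finset.univ.erase i).card := Finset.card_le_card hsub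
    _ < Finset.univ.card := Finset.card_erase_lt_of_mem (Finset.mem_univ i)
    _ = m := by simp

/-- The number `φ_β(i)` (0-indexed) of the pipe entering in row `i`: pipes are numbered
counterclockwise starting from the NW corner. -/
def pipeNo {m : ℕ} (β : Fin m → Bool) (i : Fin m) : Fin m :=
  if hβ : β i then
    ⟨(Finset.univ.filter (fun a => a < i ∧ β a)).card,
      filter_card_lt i _ (fun a ha => ne_of_lt ha.1)⟩
  else
    ⟨(Finset.univ.filter (fun a : Fin m => β a)).card +
        (Finset.univ.filter (fun a : Fin m => i < a ∧ ¬(β a : Prop))).card, by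
      have hd : Disjoint (Finset.univ.filter (fun a : Fin m => (β a : Prop)))
          (Finset.univ.filter (fun a : Fin m => i < a ∧ ¬(β a : Prop))) := by
        rw [Finset.disjoint_left]
        intro a ha hb
        exact (Finset.mem_filter.mp hb).2.2 (Finset.mem_filter.mp ha).2
      rw [← Finset.card_union_of_disjoint hd, ← Finset.filter_or]
      refine filter_card_lt i _ ?_
      rintro a (h1 | ⟨h2, _⟩)
      · rintro rfl; exact hβ h1
      · exact ne_of_gt h2⟩

/-- A hybrid generic pipe dream of type `β`: allowed tiles, matching of occupied edges,
unoccupied South boundary, and entering conditions on the West/East boundaries. -/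
def IsHGPD (m n : ℕ) (β : Fin m → Bool) (f : Fin m → Fin n → Tile) : Prop :=
  (∀ i j, allowedIn (β i) (f i j)) ∧
  (∀ (i : Fin m) (j : Fin n) (h : (j : ℕ) + 1 < n),
    (f i j).occE = (f i ⟨j + 1, h⟩).occW) ∧
  (∀ (i : Fin m) (h : (i : ℕ) + 1 < m) (j : Fin n),
    (f i j).occS = (f ⟨i + 1, h⟩ j).occN) ∧
  (∀ (i : Fin m) (j : Fin n), (i : ℕ) + 1 = m → (f i j).occS = false) ∧
  (∀ (i : Fin m) (j : Fin n), (j : ℕ) = 0 → (f i j).occW = β i) ∧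
  (∀ (i : Fin m) (j : Fin n), (j : ℕ) + 1 = n → (f i j).occE = !β i)

/-- The pipe dream has connectivity `π`: the pipe numbered `k` exits the North side in
column `π(k)`; equivalently the pipe entering in row `i` exits in column `π(φ_β(i))`. -/
def Connectivity (m n : ℕ) (β : Fin m → Bool) (f : Fin m → Fin n → Tile)
    (π : Fin m ↪ Fin n) : Prop :=
  ∀ i : Fin m, northExit m n β f (π (pipeNo β i)) = some i

/-! ## Weights -/

/-- Variable set for `ℤ[x_1,…,x_m,y_1,…,y_n,A,B]`: `none` is `B`, `some (inl i)` is `x_i`,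
`some (inr (inl j))` is `y_j`, `some (inr (inr ()))` is `A`. -/
abbrev PDVar (m n : ℕ) := Option (Fin m ⊕ (Fin n ⊕ Unit))

noncomputable def xP (m n : ℕ) (i : Fin m) : MvPolynomial (PDVar m n) ℤ :=
  MvPolynomial.X (some (Sum.inl i))

noncomputable def yP (m n : ℕ) (j : Fin n) : MvPolynomial (PDVar m n) ℤ :=
  MvPolynomial.X (some (Sum.inr (Sum.inl j)))

noncomputable def AP (m n : ℕ) : MvPolynomial (PDVar m n) ℤ :=
  MvPolynomial.X (some (Sum.inr (Sum.inr ())))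

noncomputable def BP (m n : ℕ) : MvPolynomial (PDVar m n) ℤ :=
  MvPolynomial.X none

/-- The weight of the tile in cell `(i,j)` of a row of type `rt` whose entering pipe is
numbered `k`. -/
noncomputable def tileWt (m n : ℕ) (rt : Bool) (t : Tile) (k : Fin m) (j : Fin n) :
    MvPolynomial (PDVar m n) ℤ :=
  if t.isElbow then AP m n + BP m n
  else if t.isStraight then
    (if rt then AP m n + xP m n k - yP m n j else BP m n - xP m n k + yP m n j)
  else
    (if rt then BP m n - xP m n k + yP m n j else AP m n + xP m n k - yP m n j)

/-- The weight of a pipe dream: the product of the weights of its tiles. -/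
noncomputable def pdWeight (m n : ℕ) (β : Fin m → Bool) (f : Fin m → Fin n → Tile) :
    MvPolynomial (PDVar m n) ℤ :=
  ∏ i : Fin m, ∏ j : Fin n, tileWt m n (β i) (f i j) (pipeNo β i) j

open Classical in
/-- The generic pipe dream polynomial `G_π^β`: the sum of the weights of all hybrid generic
pipe dreams of type `β` with connectivity `π`. -/
noncomputable def GPD (m n : ℕ) (β : Fin m → Bool) (π : Fin m ↪ Fin n) :
    MvPolynomial (PDVar m n) ℤ :=
  ∑ f ∈ Finset.univ.filter
      (fun f : Fin m → Fin n → Tile => IsHGPD m n β f ∧ Connectivity m n β f π),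
    pdWeight m n β f

/-! Changing the type of the bottom row is a weight-preserving involution on pipe dreams.
Nothing enters the bottom row from the South, so its tiles are blank, straight W–E, or the
single elbow carrying its own pipe up, and by edge matching that pipe exits North at the column
of the elbow, whatever the row type. Exchanging blank ↔ W–E and W–N ↔ E–N thus turns a `⊤`
bottom row into a `⊥` one with the same exit column; as the two row types give blank and
straight tiles each other's weights, the weight is unchanged. -/

lemma Finset.card_filter_add_ite_eq {α : Type*} [Fintype α] [DecidableEq α] {p q : α → Prop}
    [DecidablePred p] [DecidablePred q] (x : α) (h : ∀ a, a ≠ x → (p a ↔ q a)) :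
    (Finset.univ.filter p).card + (if q x then 1 else 0) =
      (Finset.univ.filter q).card + (if p x then 1 else 0) := by
  rw [Finset.card_filter, Finset.card_filter, ← Finset.add_sum_erase _ _ (Finset.mem_univ x),
    ← Finset.add_sum_erase _ _ (Finset.mem_univ x),
    Finset.sum_congr rfl fun a ha => if_congr (h a (Finset.ne_of_mem_erase ha)) rfl rfl]
  ring

namespace Tile

def swapBottom : Tile → Tile
  | blank => we | we => blank | wn => en | en => wn
  | t => t

@[simp] lemma swapBottom_swapBottom (t : Tile) : t.swapBottom.swapBottom = t := by
  cases t <;> rfl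

@[simp] lemma occN_swapBottom (t : Tile) : t.swapBottom.occN = t.occN := by cases t <;> rfl

@[simp] lemma occS_swapBottom (t : Tile) : t.swapBottom.occS = t.occS := by cases t <;> rfl

lemma occW_swapBottom {t : Tile} (h : t.occS = false) : t.swapBottom.occW = !t.occW := by
  cases t <;> simp_all [occS, occW, swapBottom]

lemma occE_swapBottom {t : Tile} (h : t.occS = false) : t.swapBottom.occE = !t.occE := by
  cases t <;> simp_all [occS, occE, swapBottom]

lemma eq_of_allowedIn_true {t : Tile} (ht : allowedIn true t) (h : t.occS = false) :
    t = blank ∨ t = wn ∨ t = we := by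
  cases t <;> simp_all [allowedIn, occS]

lemma allowedIn_swapBottom {rt : Bool} {t : Tile} (ht : allowedIn rt t) (h : t.occS = false) :
    allowedIn (!rt) t.swapBottom := by
  cases rt <;> cases t <;> simp_all [allowedIn, occS, swapBottom]

@[simp] lemma occW_mirror (t : Tile) : t.mirror.occW = t.occE := by cases t <;> rfl

@[simp] lemma occE_mirror (t : Tile) : t.mirror.occE = t.occW := by cases t <;> rfl

@[simp] lemma occN_mirror (t : Tile) : t.mirror.occN = t.occN := by cases t <;> rfl

@[simp] lemma occS_mirror (t : Tile) : t.mirror.occS = t.occS := by cases t <;> rfl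

lemma allowedIn_mirror {rt : Bool} {t : Tile} (h : allowedIn rt t) : allowedIn (!rt) t.mirror := by
  cases rt <;> cases t <;> simp_all [allowedIn, mirror]

end Tile

lemma tileWt_swapBottom (m n : ℕ) (rt : Bool) {t : Tile} (h : t.occS = false) (k : Fin m)
    (j : Fin n) : tileWt m n (!rt) t.swapBottom k j = tileWt m n rt t k j := by
  cases rt <;> cases t <;> simp_all [tileWt, Tile.occS, Tile.swapBottom, Tile.isElbow,
    Tile.isStraight]

section Routing

variable {ι : Type*} {n : ℕ} {t : ℕ → Tile} (b : ℕ → Option ι) (e : Option ι)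

lemma hTrace_congr {b₁ b₂ : ℕ → Option ι} :
    ∀ j, (∀ k < j, b₁ k = b₂ k) → hTrace t b₁ e j = hTrace t b₂ e j
  | 0, _ => rfl
  | j + 1, h => by
    simp only [hTrace]
    rw [hTrace_congr j fun k hk => h k (by omega), h j (by omega)]

lemma topOutT_congr {b₁ b₂ : ℕ → Option ι} (j : ℕ) (h : ∀ k ≤ j, b₁ k = b₂ k) :
    topOutT t b₁ e j = topOutT t b₂ e j := by
  rw [topOutT, topOutT, hTrace_congr e j fun k hk => h k hk.le, h j le_rfl]

lemma rowTop_congr (rt : Bool) {b₁ b₂ : ℕ → Option ι} {j : ℕ} (hj : j < n)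
    (h : ∀ k < n, b₁ k = b₂ k) : rowTop rt n t b₁ e j = rowTop rt n t b₂ e j := by
  cases rt <;> simp only [rowTop, topOutB, Bool.false_eq_true, if_false, if_true]
  · exact topOutT_congr e _ fun k _ => h _ (by omega)
  · exact topOutT_congr e j fun k hk => h k (by omega)

section SouthFree

variable (hS : ∀ k < n, (t k).occS = false)
  (hEW : ∀ k, k + 1 < n → (t k).occE = (t (k + 1)).occW)
include hS hEW

lemma hTrace_of_occS_eq_false (hA : ∀ k < n, allowedIn true (t k))
    (hW : (t 0).occW = true) : ∀ j < n, hTrace t b e j = if (t j).occW then e else none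
  | 0, _ => by simp [hTrace, hW]
  | j + 1, hj => by
    rw [hTrace, hTrace_of_occS_eq_false hA hW j (by omega), ← hEW j hj]
    rcases Tile.eq_of_allowedIn_true (hA j (by omega)) (hS j (by omega)) with h | h | h <;>
      simp [h, eOutT, Tile.occW, Tile.occE]

lemma topOutT_of_occS_eq_false (hA : ∀ k < n, allowedIn true (t k))
    (hW : (t 0).occW = true) {j : ℕ} (hj : j < n) :
    topOutT t b e j = if (t j).occN then e else none := by
  rw [topOutT, hTrace_of_occS_eq_false b e hS hEW hA hW j hj]
  rcases Tile.eq_of_allowedIn_true (hA j hj) (hS j hj) with h | h | h <;>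
    simp [h, nOutT, Tile.occW, Tile.occN]

lemma topOutB_of_occS_eq_false (hA : ∀ k < n, allowedIn false (t k))
    (hE : (t (n - 1)).occE = true) {j : ℕ} (hj : j < n) :
    topOutB n t b e j = if (t j).occN then e else none := by
  rw [topOutB, topOutT_of_occS_eq_false (n := n) _ e
    (fun k hk => by rw [Tile.occS_mirror]; exact hS _ (by omega))
    (fun k hk => by
      rw [Tile.occE_mirror, Tile.occW_mirror, hEW _ (by omega),
        show n - 1 - (k + 1) + 1 = n - 1 - k by omega])
    (fun k hk => Tile.allowedIn_mirror (hA _ (by omega))) (by simpa using hE) (by omega)]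
  rw [show n - 1 - (n - 1 - j) = j by omega, Tile.occN_mirror]

lemma rowTop_of_occS_eq_false (rt : Bool) (hA : ∀ k < n, allowedIn rt (t k))
    (hW : (t 0).occW = rt) (hE : (t (n - 1)).occE = !rt) {j : ℕ} (hj : j < n) :
    rowTop rt n t b e j = if (t j).occN then e else none := by
  cases rt
  · exact topOutB_of_occS_eq_false b e hS hEW hA hE hj
  · exact topOutT_of_occS_eq_false b e hS hEW hA hW hj

end SouthFree

end Routing

section LastRow

variable {m n : ℕ}

def LastLetterFlip (β β' : Fin m → Bool) : Prop :=
  ∀ i : Fin m, β' i = if (i : ℕ) + 1 = m then !β i else β i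

namespace LastLetterFlip

variable {β β' : Fin m → Bool} (h : LastLetterFlip β β')
include h

lemma apply_last {i : Fin m} (hi : (i : ℕ) + 1 = m) : β' i = !β i := by
  simpa [hi] using h i

lemma apply_of_ne_last {i : Fin m} (hi : (i : ℕ) + 1 ≠ m) : β' i = β i := by
  simpa [hi] using h i

lemma symm : LastLetterFlip β' β := fun i => by
  by_cases hi : (i : ℕ) + 1 = m
  · simp [hi, h.apply_last hi]
  · simp [hi, h.apply_of_ne_last hi]

/-- The last row contributes its own pipe in both types, as the last `⊤` pipe or as the first
`⊥` pipe counterclockwise, so no pipe is renumbered. -/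
lemma pipeNo_eq : pipeNo β' = pipeNo β := by
  funext i
  set L : Fin m := ⟨m - 1, by have := i.isLt; omega⟩
  have hL : (L : ℕ) + 1 = m := by have := i.isLt; simp [L]; omega
  have hle : ∀ a : Fin m, a ≤ L := fun a => Fin.le_def.mpr (by have := a.isLt; simp [L]; omega)
  have hne : ∀ a : Fin m, a ≠ L → (a : ℕ) + 1 ≠ m := fun a ha ha' =>
    ha (Fin.ext (by simp [L]; omega))
  wlog hβL : β L = true generalizing β β'
  · exact (this h.symm (by simpa [h.apply_last hL] using hβL)).symm
  have hβ'L : β' L = false := by simp [h.apply_last hL, hβL]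
  apply Fin.ext
  by_cases hi : i = L
  · rw [hi]
    have hempty : Finset.univ.filter (fun a : Fin m => L < a ∧ ¬(β' a : Prop)) = ∅ :=
      Finset.filter_false_of_mem fun a _ ⟨hLa, _⟩ => (hle a).not_gt hLa
    have := Finset.card_filter_add_ite_eq (p := fun a : Fin m => a < L ∧ β a)
      (q := fun a => β' a) L fun a ha => by
        rw [h.apply_of_ne_last (hne a ha)]
        simp [lt_of_le_of_ne (hle a) ha]
    simp_all [pipeNo]
  · have hiL : i < L := lt_of_le_of_ne (hle i) hi
    have hagree : ∀ a, a ≠ L → β' a = β a := fun a ha => h.apply_of_ne_last (hne a ha)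
    cases hβi : β i
    · have c1 := Finset.card_filter_add_ite_eq (p := fun a : Fin m => β' a)
        (q := fun a => β a) L fun a ha => by rw [hagree a ha]
      have c2 := Finset.card_filter_add_ite_eq (p := fun a : Fin m => i < a ∧ ¬β' a)
        (q := fun a => i < a ∧ ¬β a) L fun a ha => by rw [hagree a ha]
      simp only [pipeNo, hβi, hagree i hi, Bool.false_eq_true, dite_false]
      simp [hβL, hβ'L, hiL] at c1 c2 ⊢
      omega
    · simp only [pipeNo, hβi, hagree i hi, dif_pos]
      congr 1
      exact Finset.filter_congr fun a _ => and_congr_right fun hai =>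
        by rw [hagree a (ne_of_lt (lt_of_lt_of_le hai (hle i)))]

end LastLetterFlip

def flipLastRow (f : Fin m → Fin n → Tile) : Fin m → Fin n → Tile :=
  fun i j => if (i : ℕ) + 1 = m then (f i j).swapBottom else f i j

section flipLastRow

variable {f : Fin m → Fin n → Tile} {i : Fin m}

lemma flipLastRow_of_last (hi : (i : ℕ) + 1 = m) (j : Fin n) :
    flipLastRow f i j = (f i j).swapBottom := if_pos hi

lemma flipLastRow_of_ne_last (hi : (i : ℕ) + 1 ≠ m) : flipLastRow f i = f i :=
  funext fun _ => if_neg hi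

@[simp] lemma flipLastRow_flipLastRow (f : Fin m → Fin n → Tile) :
    flipLastRow (flipLastRow f) = f := by
  funext i j
  by_cases hi : (i : ℕ) + 1 = m <;> simp [flipLastRow, hi]

lemma tilesOf_of_lt (f : Fin m → Fin n → Tile) (i : Fin m) {j : ℕ} (hj : j < n) :
    tilesOf f i j = f i ⟨j, hj⟩ := dif_pos hj

variable {β β' : Fin m → Bool}

lemma isHGPD_flipLastRow (hf : IsHGPD m n β f) (h : LastLetterFlip β β') :
    IsHGPD m n β' (flipLastRow f) := by
  obtain ⟨hA, hEW, hNS, hS, hW, hE⟩ := hf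
  refine ⟨fun i j => ?_, fun i j hj => ?_, fun i hi j => ?_, fun i j hi => ?_, fun i j hj => ?_,
    fun i j hj => ?_⟩
  · by_cases hi : (i : ℕ) + 1 = m
    · rw [flipLastRow_of_last hi, h.apply_last hi]
      exact Tile.allowedIn_swapBottom (hA i j) (hS i j hi)
    · rw [flipLastRow_of_ne_last hi, h.apply_of_ne_last hi]
      exact hA i j
  · by_cases hi : (i : ℕ) + 1 = m
    · rw [flipLastRow_of_last hi, flipLastRow_of_last hi,
        Tile.occE_swapBottom (hS i j hi), Tile.occW_swapBottom (hS i _ hi), hEW i j hj]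
    · rw [flipLastRow_of_ne_last hi]
      exact hEW i j hj
  · rw [flipLastRow_of_ne_last (i := i) (by omega)]
    by_cases hi' : (i : ℕ) + 1 + 1 = m
    · rw [flipLastRow_of_last hi', Tile.occN_swapBottom]
      exact hNS i hi j
    · rw [flipLastRow_of_ne_last hi']
      exact hNS i hi j
  · rw [flipLastRow_of_last hi, Tile.occS_swapBottom]
    exact hS i j hi
  · by_cases hi : (i : ℕ) + 1 = m
    · rw [flipLastRow_of_last hi, Tile.occW_swapBottom (hS i j hi), hW i j hj, h.apply_last hi]
    · rw [flipLastRow_of_ne_last hi, hW i j hj, h.apply_of_ne_last hi]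
  · by_cases hi : (i : ℕ) + 1 = m
    · rw [flipLastRow_of_last hi, Tile.occE_swapBottom (hS i j hi), hE i j hj, h.apply_last hi]
    · rw [flipLastRow_of_ne_last hi, hE i j hj, h.apply_of_ne_last hi]

lemma pdWeight_flipLastRow (hf : IsHGPD m n β f) (h : LastLetterFlip β β') :
    pdWeight m n β' (flipLastRow f) = pdWeight m n β f := by
  obtain ⟨-, -, -, hS, -, -⟩ := hf
  refine Finset.prod_congr rfl fun i _ => Finset.prod_congr rfl fun j _ => ?_
  rw [h.pipeNo_eq]
  by_cases hi : (i : ℕ) + 1 = m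
  · rw [flipLastRow_of_last hi, h.apply_last hi]
    exact tileWt_swapBottom m n (β i) (hS i j hi) _ j
  · rw [flipLastRow_of_ne_last hi, h.apply_of_ne_last hi]

end flipLastRow

lemma IsHGPD.rowTop_lastRow {β : Fin m → Bool} {f : Fin m → Fin n → Tile}
    (hf : IsHGPD m n β f) {i : Fin m} (hi : (i : ℕ) + 1 = m) {ι : Type*} (b : ℕ → Option ι)
    (e : Option ι) {j : ℕ} (hj : j < n) :
    rowTop (β i) n (tilesOf f i) b e j = if (f i ⟨j, hj⟩).occN then e else none := by
  obtain ⟨hA, hEW, -, hS, hW, hE⟩ := hf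
  rw [rowTop_of_occS_eq_false b e (fun k hk => by rw [tilesOf_of_lt f i hk]; exact hS i _ hi)
    (fun k hk => by rw [tilesOf_of_lt f i hk, tilesOf_of_lt f i (by omega)]; exact hEW i _ hk)
    (β i) (fun k hk => by rw [tilesOf_of_lt f i hk]; exact hA i _)
    (by rw [tilesOf_of_lt f i (by omega)]; exact hW i _ rfl)
    (by rw [tilesOf_of_lt f i (by omega)]; exact hE i _ (by simp; omega)) hj,
    tilesOf_of_lt f i hj]

lemma lineState_eq_of_occN_lastRow {β β' : Fin m → Bool} {f f' : Fin m → Fin n → Tile}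
    (hf : IsHGPD m n β f) (hf' : IsHGPD m n β' f')
    (hβ : ∀ i : Fin m, (i : ℕ) + 1 ≠ m → β' i = β i)
    (hrows : ∀ i : Fin m, (i : ℕ) + 1 ≠ m → f' i = f i)
    (hN : ∀ (i : Fin m) (j : Fin n), (i : ℕ) + 1 = m → (f' i j).occN = (f i j).occN) :
    ∀ r, ∀ j < n, lineState m n β' f' r j = lineState m n β f r j
  | 0, _, _ => rfl
  | r + 1, j, hj => by
    by_cases hr : r < m
    · simp only [lineState, dif_pos hr]
      set i : Fin m := ⟨m - 1 - r, by omega⟩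
      by_cases hi : (i : ℕ) + 1 = m
      · rw [hf.rowTop_lastRow hi _ _ hj, hf'.rowTop_lastRow hi _ _ hj, hN i _ hi]
      · rw [hβ i hi, show tilesOf f' i = tilesOf f i by unfold tilesOf; rw [hrows i hi]]
        exact rowTop_congr _ (β i) hj fun k hk =>
          lineState_eq_of_occN_lastRow hf hf' hβ hrows hN r k hk
    · simp only [lineState, dif_neg hr]
      exact lineState_eq_of_occN_lastRow hf hf' hβ hrows hN r j hj

lemma IsHGPD.connectivity_flipLastRow_iff {β β' : Fin m → Bool} {f : Fin m → Fin n → Tile}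
    (hf : IsHGPD m n β f) (h : LastLetterFlip β β') (π : Fin m ↪ Fin n) :
    Connectivity m n β' (flipLastRow f) π ↔ Connectivity m n β f π := by
  have hexit (x : Fin n) : northExit m n β' (flipLastRow f) x = northExit m n β f x :=
    lineState_eq_of_occN_lastRow hf (isHGPD_flipLastRow hf h) (fun i hi => h.apply_of_ne_last hi)
      (fun i hi => flipLastRow_of_ne_last hi)
      (fun i j hi => by rw [flipLastRow_of_last hi, Tile.occN_swapBottom]) m x x.isLt
  simp only [Connectivity, hexit, h.pipeNo_eq]

lemma isHGPD_and_connectivity_flipLastRow {β β' : Fin m → Bool} {f : Fin m → Fin n → Tile}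
    {π : Fin m ↪ Fin n} (hf : IsHGPD m n β f ∧ Connectivity m n β f π)
    (h : LastLetterFlip β β') :
    IsHGPD m n β' (flipLastRow f) ∧ Connectivity m n β' (flipLastRow f) π :=
  ⟨isHGPD_flipLastRow hf.1 h, (hf.1.connectivity_flipLastRow_iff h π).2 hf.2⟩

end LastRow

theorem GPD_independent_of_last_letter_general (m n : ℕ)
    (β β' : Fin m → Bool)
    (hβ : ∀ i : Fin m, (i : ℕ) + 1 = m → β i = true)
    (hβ' : ∀ i : Fin m, (i : ℕ) + 1 = m → β' i = false)
    (hpre : ∀ i : Fin m, (i : ℕ) + 1 ≠ m → β i = β' i)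
    (π : Fin m ↪ Fin n) :
    GPD m n β π = GPD m n β' π := by
  have h : LastLetterFlip β β' := fun i => by
    by_cases hi : (i : ℕ) + 1 = m
    · simp [hi, hβ i hi, hβ' i hi]
    · simp [hi, hpre i hi]
  unfold GPD
  refine Finset.sum_nbij' flipLastRow flipLastRow (fun f hf => ?_) (fun f hf => ?_)
    (fun f _ => flipLastRow_flipLastRow f) (fun f _ => flipLastRow_flipLastRow f)
    (fun f hf => ?_)
  · simp only [Finset.mem_filter, Finset.mem_univ, true_and] at hf ⊢
    exact isHGPD_and_connectivity_flipLastRow hf h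
  · simp only [Finset.mem_filter, Finset.mem_univ, true_and] at hf ⊢
    exact isHGPD_and_connectivity_flipLastRow hf h.symm
  · simp only [Finset.mem_filter, Finset.mem_univ, true_and] at hf
    exact (pdWeight_flipLastRow hf.1 h).symm

/-- Lemma: `G_π^β` does not depend on the last letter of `β`. -/
theorem GPD_independent_of_last_letter (m n : ℕ) (hm : 1 ≤ m) (hmn : m ≤ n)
    (β β' : Fin m → Bool)
    (hβ : ∀ i : Fin m, (i : ℕ) + 1 = m → β i = true)
    (hβ' : ∀ i : Fin m, (i : ℕ) + 1 = m → β' i = false)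
    (hpre : ∀ i : Fin m, (i : ℕ) + 1 ≠ m → β i = β' i)
    (π : Fin m ↪ Fin n) :
    GPD m n β π = GPD m n β' π :=
  GPD_independent_of_last_letter_general m n β β' hβ hβ' hpre π
end
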